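/- arXiv:2603.18517 — 6 statements merged into one kernel-verified Lean document; each statement's English description precedes it below -/
import Mathlib

section
/- Let k ≥ 2 and n ≥ 2k be integers. Let B = K_{k-1,n-1} ⊔ \widehat{K_{n-k+1,1}} (the balanced bipartite graph on parts X, Y of size n each, where X = X₁ ∪ X₂ with |X₁| = k-1, |X₂| = n-k+1 and Y = Y₁ ∪ Y₂ with |Y₁| = n-1, |Y₂| = 1, and xy is an edge iff x ∈ X₁ or y ∈ Y₁, except exactly one vertex of X₂ is joined to the vertex of Y₂). Then the spectral radius ρ(B) is the largest root of x⁴ − (n(n−1) + (k−1))x² + (n−1)(n−k+1)(k−1) = 0. -/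
/-!
Vertices in the same class `X₁, X₂, Y₁, Y₂` have the same neighbourhood, so the adjacency matrix
of `B` is a blow-up `M.submatrix π π` of a `4 × 4` pattern `M`. An eigenvector for a nonzero
eigenvalue is `μ⁻¹` times its image, hence constant on the classes; so the nonzero eigenvalues of
`B` are exactly the eigenvalues of the quotient matrix `M * diagonal (class sizes)`, whose
characteristic polynomial is the quartic. The largest root of the quartic is nonnegative, so the
eigenvalue `0` does not exceed it and the spectral radius is that root.
-/

open SimpleGraph

/-- Spectral radius: supremum of the (real) eigenvalues of the adjacency matrix. -/
noncomputable def specRad {V : Type*} [Fintype V] [DecidableEq V] (G : SimpleGraph V) : ℝ :=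
  sSup {x : ℝ | Module.End.HasEigenvalue
    (Matrix.toLin' (@SimpleGraph.adjMatrix ℝ V G (Classical.decRel _) _ _)) x}

/-- The map on edges used by the `(x,y)`-shift: replace `y` by `x`. -/
def shiftMap {V : Type*} [DecidableEq V] (x y : V) (e : Sym2 V) : Sym2 V :=
  Sym2.map (fun v => if v = y then x else v) e

open scoped Classical in
/-- The `(x,y)`-shift of a graph. -/
noncomputable def shiftGraph {V : Type*} [DecidableEq V] (G : SimpleGraph V) (x y : V) :
    SimpleGraph V :=
  SimpleGraph.fromEdgeSet
    ((fun e => if y ∈ e ∧ x ∉ e ∧ shiftMap x y e ∉ G.edgeSet then shiftMap x y e else e) ''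
      G.edgeSet)

/-- Balanced bipartite graph on `[2n]` with parts `X = {0,…,n-1}`, `Y = {n,…,2n-1}`:
`x ∈ X` is adjacent to `y ∈ Y` iff `x < a` or `y < 2n - b`.
`bipG n (k-1) 1 = K_{k-1,n-1} ⊔ quasi-complement of K_{n-k+1,1}`. -/
def bipG (n a b : ℕ) : SimpleGraph (Fin (2*n)) where
  Adj u v := (u.val < n ∧ n ≤ v.val ∧ (u.val < a ∨ v.val < 2*n - b)) ∨
             (v.val < n ∧ n ≤ u.val ∧ (v.val < a ∨ u.val < 2*n - b))
  symm := ⟨by intro u v h; tauto⟩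
  loopless := ⟨by intro u h; rcases h with ⟨h1, h2, -⟩ | ⟨h1, h2, -⟩ <;> omega⟩

/-- `H` is a rainbow `k`-factor of the family `F`. -/
def IsRainbowFactor {V : Type*} {m : ℕ} (F : Fin m → SimpleGraph V) (k : ℕ)
    (H : SimpleGraph V) : Prop :=
  (∀ v, (H.neighborSet v).ncard = k) ∧
  ∃ φ : H.edgeSet ≃ Fin m, ∀ e : H.edgeSet, (e : Sym2 V) ∈ (F (φ e)).edgeSet

open Finset Matrix Module.End

namespace Matrix

variable {V ι K : Type*} [Fintype V] [Fintype ι] [DecidableEq ι] [Field K]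

/-- The quotient matrix of the equitable partition of `B.submatrix π π` into the fibres of `π`. -/
def quotientMatrix (B : Matrix ι ι K) (π : V → ι) : Matrix ι ι K :=
  B * diagonal fun j => (Fintype.card {w // π w = j} : K)

theorem quotientMatrix_mulVec_apply (B : Matrix ι ι K) (π : V → ι) (f : ι → K) (i : ι) :
    (quotientMatrix B π *ᵥ f) i = ∑ w, B i (π w) * f (π w) := by
  calc (quotientMatrix B π *ᵥ f) i = ∑ j, ∑ _w : {w // π w = j}, B i j * f j := by
        simp only [quotientMatrix, mulVec, dotProduct, mul_diagonal, sum_const, card_univ,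
          nsmul_eq_mul]
        exact sum_congr rfl fun j _ => by ring
    _ = ∑ w, B i (π w) * f (π w) := Fintype.sum_fiberwise' π fun j => B i j * f j

theorem submatrix_mulVec_comp (B : Matrix ι ι K) (π : V → ι) (f : ι → K) :
    B.submatrix π π *ᵥ (f ∘ π) = (quotientMatrix B π *ᵥ f) ∘ π := by
  ext u
  rw [Function.comp_apply, quotientMatrix_mulVec_apply]
  rfl

variable [DecidableEq V] {B : Matrix ι ι K} {π : V → ι} {μ : K}

theorem hasEigenvalue_submatrix_of_quotientMatrix (hπ : Function.Surjective π)
    (h : HasEigenvalue (toLin' (quotientMatrix B π)) μ) :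
    HasEigenvalue (toLin' (B.submatrix π π)) μ := by
  obtain ⟨f, hf, hf0⟩ := h.exists_hasEigenvector
  rw [mem_eigenspace_iff, toLin'_apply] at hf
  refine hasEigenvalue_of_hasEigenvector (x := f ∘ π) ⟨?_, ?_⟩
  · rw [mem_eigenspace_iff, toLin'_apply, submatrix_mulVec_comp, hf]
    rfl
  · intro h0
    apply hf0
    funext i
    obtain ⟨u, rfl⟩ := hπ i
    exact congrFun h0 u

theorem hasEigenvalue_quotientMatrix_of_submatrix (hμ : μ ≠ 0)
    (h : HasEigenvalue (toLin' (B.submatrix π π)) μ) :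
    HasEigenvalue (toLin' (quotientMatrix B π)) μ := by
  obtain ⟨v, hv, hv0⟩ := h.exists_hasEigenvector
  rw [mem_eigenspace_iff, toLin'_apply] at hv
  -- an eigenvector for `μ ≠ 0` is `μ⁻¹` times its image, which is constant on the fibres
  set f : ι → K := fun i => μ⁻¹ * ∑ w, B i (π w) * v w
  have hvf : v = f ∘ π := by
    funext u
    rw [Function.comp_apply, ← inv_mul_cancel_left₀ hμ (v u)]
    exact congrArg _ (congrFun hv u).symm
  refine hasEigenvalue_of_hasEigenvector (x := f) ⟨?_, ?_⟩
  · rw [mem_eigenspace_iff, toLin'_apply]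
    funext i
    have hfv : ∀ w, f (π w) = v w := fun w => (congrFun hvf w).symm
    rw [quotientMatrix_mulVec_apply, Pi.smul_apply, smul_eq_mul]
    simp only [hfv]
    exact (mul_inv_cancel_left₀ hμ _).symm
  · intro hf0
    exact hv0 (by rw [hvf, hf0]; rfl)

theorem hasEigenvalue_toLin'_iff_det_eq_zero {n R : Type*} [Fintype n] [DecidableEq n]
    [CommRing R] [IsDomain R] (A : Matrix n n R) (μ : R) :
    HasEigenvalue (toLin' A) μ ↔ (scalar n μ - A).det = 0 := by
  rw [hasEigenvalue_iff_isRoot_charpoly, charpoly_toLin', Polynomial.IsRoot, eval_charpoly]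

end Matrix

theorem Fin.card_filter_le_val_lt {N : ℕ} (a b : ℕ) (hb : b ≤ N) :
    #{u : Fin N | a ≤ u.val ∧ u.val < b} = b - a := by
  rw [← Nat.card_Ico, ← card_map Fin.valEmbedding]
  congr 1
  ext m
  simp only [mem_map, mem_filter, mem_univ, true_and, Fin.valEmbedding_apply, mem_Ico]
  exact ⟨by rintro ⟨u, hu, rfl⟩; exact hu, fun hm => ⟨⟨m, by omega⟩, hm, rfl⟩⟩

/-- The largest real root of `x ^ 4 - S * x ^ 2 + P` when `0 ≤ S` and `4 * P ≤ S ^ 2`. -/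
noncomputable def biquadraticMaxRoot (S P : ℝ) : ℝ :=
  √((S + √(S ^ 2 - 4 * P)) / 2)

theorem biquadraticMaxRoot_isRoot {S P : ℝ} (hS : 0 ≤ S) (hD : 0 ≤ S ^ 2 - 4 * P) :
    biquadraticMaxRoot S P ^ 4 - S * biquadraticMaxRoot S P ^ 2 + P = 0 := by
  have hr : √(S ^ 2 - 4 * P) ^ 2 = S ^ 2 - 4 * P := Real.sq_sqrt hD
  have hm : biquadraticMaxRoot S P ^ 2 = (S + √(S ^ 2 - 4 * P)) / 2 :=
    Real.sq_sqrt (by positivity)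
  linear_combination (biquadraticMaxRoot S P ^ 2 + (S + √(S ^ 2 - 4 * P)) / 2 - S) * hm
    + hr / 4

theorem le_biquadraticMaxRoot {S P x : ℝ} (hD : 0 ≤ S ^ 2 - 4 * P)
    (hx : x ^ 4 - S * x ^ 2 + P = 0) : x ≤ biquadraticMaxRoot S P := by
  have hr : √(S ^ 2 - 4 * P) ^ 2 = S ^ 2 - 4 * P := Real.sq_sqrt hD
  have hfac :
      (x ^ 2 - (S + √(S ^ 2 - 4 * P)) / 2) * (x ^ 2 - (S - √(S ^ 2 - 4 * P)) / 2) = 0 := by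
    linear_combination hx - hr / 4
  have hx2 : x ^ 2 ≤ (S + √(S ^ 2 - 4 * P)) / 2 := by
    have := Real.sqrt_nonneg (S ^ 2 - 4 * P)
    rcases mul_eq_zero.mp hfac with h | h <;> linarith
  calc x ≤ |x| := le_abs_self x
    _ = √(x ^ 2) := (Real.sqrt_sq_eq_abs x).symm
    _ ≤ biquadraticMaxRoot S P := Real.sqrt_le_sqrt hx2

/-- The four vertex classes `X₁, X₂, Y₁, Y₂` of `bipG n (k - 1) 1`. -/
def bipClass (n k : ℕ) (u : Fin (2 * n)) : Fin 4 :=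
  if u.val < k - 1 then 0 else if u.val < n then 1 else if u.val < 2 * n - 1 then 2 else 3

def bipPattern : Matrix (Fin 4) (Fin 4) ℝ :=
  !![0, 0, 1, 1; 0, 0, 1, 0; 1, 1, 0, 0; 1, 0, 0, 0]

theorem bipG_adj {n a b : ℕ} {u v : Fin (2 * n)} : (bipG n a b).Adj u v ↔
    (u.val < n ∧ n ≤ v.val ∧ (u.val < a ∨ v.val < 2 * n - b)) ∨
      (v.val < n ∧ n ≤ u.val ∧ (v.val < a ∨ u.val < 2 * n - b)) :=
  Iff.rfl

theorem adjMatrix_bipG_eq_submatrix {n k : ℕ} (hkn : k ≤ n)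
    [DecidableRel (bipG n (k - 1) 1).Adj] :
    (bipG n (k - 1) 1).adjMatrix ℝ = bipPattern.submatrix (bipClass n k) (bipClass n k) := by
  ext u w
  rw [adjMatrix_apply, submatrix_apply]
  unfold bipClass
  split_ifs
  all_goals simp only [bipG_adj] at *; simp [bipPattern] <;> omega

theorem bipClass_surjective {n k : ℕ} (hk : 2 ≤ k) (hn : k ≤ n) :
    Function.Surjective (bipClass n k) := by
  intro j
  fin_cases j
  · exact ⟨⟨0, by omega⟩, by unfold bipClass; split_ifs <;> simp_all <;> omega⟩
  · exact ⟨⟨k - 1, by omega⟩, by unfold bipClass; split_ifs <;> simp_all <;> omega⟩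
  · exact ⟨⟨n, by omega⟩, by unfold bipClass; split_ifs <;> simp_all <;> omega⟩
  · exact ⟨⟨2 * n - 1, by omega⟩, by unfold bipClass; split_ifs <;> simp_all <;> omega⟩

theorem card_bipClass_fiber {n k : ℕ} (hk : 1 ≤ k) (hkn : k ≤ n) (j : Fin 4) :
    Fintype.card {u // bipClass n k u = j} = ![k - 1, n - (k - 1), n - 1, 1] j := by
  obtain ⟨lo, hi, hhi, hclass, hcard⟩ : ∃ lo hi, hi ≤ 2 * n ∧
      (∀ u, bipClass n k u = j ↔ lo ≤ u.val ∧ u.val < hi) ∧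
      hi - lo = ![k - 1, n - (k - 1), n - 1, 1] j := by
    fin_cases j
    · exact ⟨0, k - 1, by omega, fun u => by unfold bipClass; split_ifs <;> simp <;> omega, rfl⟩
    · exact ⟨k - 1, n, by omega, fun u => by unfold bipClass; split_ifs <;> simp <;> omega, rfl⟩
    · exact ⟨n, 2 * n - 1, by omega, fun u => by unfold bipClass; split_ifs <;> simp <;> omega,
        by simp; omega⟩
    · exact ⟨2 * n - 1, 2 * n, le_rfl,
        fun u => by have := u.isLt; unfold bipClass; split_ifs <;> simp <;> omega,
        by simp; omega⟩
  rw [Fintype.card_subtype, filter_congr fun u _ => hclass u,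
    Fin.card_filter_le_val_lt lo hi hhi, hcard]

theorem det_scalar_sub_bipPattern_mul_diagonal (c : Fin 4 → ℝ) (μ : ℝ) :
    (scalar (Fin 4) μ - bipPattern * diagonal c).det =
      μ ^ 4 - (c 0 * c 2 + c 0 * c 3 + c 1 * c 2) * μ ^ 2 + c 0 * c 1 * c 2 * c 3 := by
  have h : scalar (Fin 4) μ - bipPattern * diagonal c =
      !![μ, 0, -c 2, -c 3; 0, μ, -c 2, 0; -c 0, -c 1, μ, 0; -c 0, 0, 0, μ] := by
    ext i j
    fin_cases i <;> fin_cases j <;> simp [bipPattern, vecMul_diagonal]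
  rw [h]
  simp [det_succ_row_zero, Fin.sum_univ_succ, Fin.succAbove]
  ring

theorem hasEigenvalue_quotientMatrix_bipPattern_iff {n k : ℕ} (hk : 1 ≤ k) (hkn : k ≤ n)
    (μ : ℝ) : HasEigenvalue (toLin' (quotientMatrix bipPattern (bipClass n k))) μ ↔
      μ ^ 4 - ((n : ℝ) * ((n : ℝ) - 1) + ((k : ℝ) - 1)) * μ ^ 2
        + ((n : ℝ) - 1) * ((n : ℝ) - (k : ℝ) + 1) * ((k : ℝ) - 1) = 0 := by
  rw [hasEigenvalue_toLin'_iff_det_eq_zero, quotientMatrix,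
    det_scalar_sub_bipPattern_mul_diagonal]
  simp only [card_bipClass_fiber hk hkn]
  have h1 : ((n - 1 : ℕ) : ℝ) = n - 1 := by rw [Nat.cast_sub (by omega), Nat.cast_one]
  have h2 : ((n - (k - 1) : ℕ) : ℝ) = n - k + 1 := by
    rw [Nat.cast_sub (by omega), Nat.cast_sub hk, Nat.cast_one]
    ring
  simp [Nat.cast_sub hk, h1, h2]
  ring_nf

theorem bip_discriminant_nonneg {n k : ℝ} (hk : 1 ≤ k) (hkn : k ≤ n) :
    0 ≤ (n * (n - 1) + (k - 1)) ^ 2 - 4 * ((n - 1) * (n - k + 1) * (k - 1)) := by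
  have hsq : (n * (n - 1) + (k - 1)) ^ 2 - 4 * ((n - 1) * (n - k + 1) * (k - 1)) =
      ((k - 1) * n - (n - k + 1) * (n - 1)) ^ 2 + 4 * ((n - k + 1) * (k - 1)) * (n - 1) ^ 2 := by
    ring
  have hnk : 0 ≤ (n - k + 1) * (k - 1) := mul_nonneg (by linarith) (by linarith)
  rw [hsq]
  positivity

/-- ρ(B_{n,k}) is the largest root of
x⁴ − (n(n−1)+(k−1))x² + (n−1)(n−k+1)(k−1). -/
theorem stmt0 (n k : ℕ) (hk : 2 ≤ k) (hn : 2*k ≤ n) :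
    (specRad (bipG n (k-1) 1))^4
        - ((n:ℝ)*((n:ℝ)-1) + ((k:ℝ)-1)) * (specRad (bipG n (k-1) 1))^2
        + ((n:ℝ)-1)*((n:ℝ)-(k:ℝ)+1)*((k:ℝ)-1) = 0 ∧
      ∀ x : ℝ, x^4 - ((n:ℝ)*((n:ℝ)-1) + ((k:ℝ)-1)) * x^2
        + ((n:ℝ)-1)*((n:ℝ)-(k:ℝ)+1)*((k:ℝ)-1) = 0 →
        x ≤ specRad (bipG n (k-1) 1) := by
  have hkn : k ≤ n := by omega
  have hk1 : (1 : ℝ) ≤ k := by exact_mod_cast (by omega : 1 ≤ k)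
  have hkn' : (k : ℝ) ≤ n := by exact_mod_cast hkn
  set S : ℝ := n * (n - 1) + (k - 1)
  set P : ℝ := (n - 1) * (n - k + 1) * (k - 1)
  have hS : 0 ≤ S := by nlinarith
  have hD : 0 ≤ S ^ 2 - 4 * P := bip_discriminant_nonneg hk1 hkn'
  have hquot := hasEigenvalue_quotientMatrix_bipPattern_iff (by omega) hkn
  have hspec : specRad (bipG n (k - 1) 1) = biquadraticMaxRoot S P := by
    refine IsGreatest.csSup_eq ⟨?_, fun x hx => ?_⟩
    · rw [Set.mem_ofPred_eq, @adjMatrix_bipG_eq_submatrix n k hkn (Classical.decRel _)]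
      exact hasEigenvalue_submatrix_of_quotientMatrix (bipClass_surjective hk hkn)
        ((hquot _).2 (biquadraticMaxRoot_isRoot hS hD))
    · rcases eq_or_ne x 0 with rfl | hx0
      · exact Real.sqrt_nonneg _
      rw [Set.mem_ofPred_eq, @adjMatrix_bipG_eq_submatrix n k hkn (Classical.decRel _)] at hx
      exact le_biquadraticMaxRoot hD
        ((hquot x).1 (hasEigenvalue_quotientMatrix_of_submatrix hx0 hx))
  rw [hspec]
  exact ⟨biquadraticMaxRoot_isRoot hS hD, fun x hx => le_biquadraticMaxRoot hD hx⟩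
end

section
/- Let k ≥ 2, n ≥ 2k, and k+1 ≤ p ≤ n−1 be integers. Then the spectral radius of K_{p-1, n+k-p+1} ⊔ \widehat{K_{n-p+1, p-k+1}} is strictly less than the spectral radius of K_{k-1, n-1} ⊔ \widehat{K_{n-k+1, 1}}. -/
open SimpleGraph

/-!
The vertex blocks `X₁ = [0,a)`, `X₂ = [a,n)`, `Y₁ = [n,2n-b)`, `Y₂ = [2n-b,2n)` of `bipG n a b`
form an equitable partition, so a positive eigenvector can be sought among block-constant
vectors. Solving the 4×4 quotient system shows that `ρ²` is the larger root of
`x² - T x + D` with `T = an + (n-a)(n-b)` and `D = ab(n-a)(n-b)`; the eigenvector is positive,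
so by the Collatz–Wielandt bound no eigenvalue exceeds it. Going from `(a,b) = (k-1,1)` to
`(p-1,p-k+1)` lowers `T` by `(p-k)(n-p)` and does not lower `D`, and the larger root is
increasing in `T` and decreasing in `D`.
-/

open Finset Matrix

theorem Matrix.le_of_hasEigenvalue_of_mulVec_le {ι : Type*} [Fintype ι] [DecidableEq ι]
    {A : Matrix ι ι ℝ} (hA : ∀ i j, 0 ≤ A i j) {v : ι → ℝ} (hv : ∀ i, 0 < v i) {μ ν : ℝ}
    (hAv : ∀ i, (A *ᵥ v) i ≤ μ * v i) (hν : Module.End.HasEigenvalue (toLin' A) ν) :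
    ν ≤ μ := by
  obtain ⟨u, hu⟩ := hν.exists_hasEigenvector
  have hAu : A *ᵥ u = ν • u := by simpa [toLin'_apply] using hu.apply_eq_smul
  obtain ⟨j, hj⟩ : ∃ j, u j ≠ 0 := by
    by_contra! h
    exact hu.2 (funext h)
  -- Compare the eigen-equation with `A v ≤ μ v` at an index maximising `|u j| / v j`.
  obtain ⟨i, -, hi⟩ := exists_max_image univ (fun j => |u j| / v j) ⟨j, mem_univ j⟩
  set c := |u i| / v i with hc_def
  have hbound : ∀ l, |u l| ≤ c * v l := fun l => (div_le_iff₀ (hv l)).1 (hi l (mem_univ l))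
  have hc : 0 < c := pos_of_mul_pos_left ((abs_pos.2 hj).trans_le (hbound j)) (hv j).le
  have hui : |u i| = c * v i := by rw [hc_def, div_mul_cancel₀ _ (hv i).ne']
  have key : |ν| * |u i| ≤ μ * |u i| :=
    calc |ν| * |u i| = |(A *ᵥ u) i| := by rw [hAu, Pi.smul_apply, smul_eq_mul, abs_mul]
      _ ≤ ∑ l, A i l * |u l| := by
        refine (abs_sum_le_sum_abs _ _).trans_eq (sum_congr rfl fun l _ => ?_)
        rw [abs_mul, abs_of_nonneg (hA i l)]
      _ ≤ ∑ l, A i l * (c * v l) :=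
        sum_le_sum fun l _ => mul_le_mul_of_nonneg_left (hbound l) (hA i l)
      _ = c * (A *ᵥ v) i := by
        simp only [mulVec, dotProduct, mul_sum]
        exact sum_congr rfl fun l _ => by ring
      _ ≤ c * (μ * v i) := mul_le_mul_of_nonneg_left (hAv i) hc.le
      _ = μ * |u i| := by rw [hui]; ring
  exact (le_abs_self ν).trans (le_of_mul_le_mul_right key (hui ▸ mul_pos hc (hv i)))

theorem specRad_eq_of_adjMatrix_mulVec_eq {V : Type*} [Fintype V] [DecidableEq V] [Nonempty V]
    (G : SimpleGraph V) [DecidableRel G.Adj] {v : V → ℝ} (hv : ∀ i, 0 < v i) {μ : ℝ}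
    (hμ : G.adjMatrix ℝ *ᵥ v = μ • v) : specRad G = μ := by
  have hA : @adjMatrix ℝ V G (Classical.decRel _) _ _ = G.adjMatrix ℝ := by congr!
  unfold specRad
  rw [hA]
  refine IsGreatest.csSup_eq ⟨?_, fun ν hν => ?_⟩
  · refine Module.End.hasEigenvalue_of_hasEigenvector (x := v) ⟨?_, ?_⟩
    · rw [Module.End.mem_eigenspace_iff, toLin'_apply, hμ]
    · obtain ⟨i⟩ := ‹Nonempty V›
      exact fun h => (hv i).ne' (congrFun h i)
  · refine le_of_hasEigenvalue_of_mulVec_le (fun i j => ?_) hv (fun i => ?_) hν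
    · rw [adjMatrix_apply]; split_ifs <;> norm_num
    · rw [hμ, Pi.smul_apply, smul_eq_mul]

theorem Matrix.submatrix_mulVec_comp_s1 {V ι R : Type*} [Fintype V] [Fintype ι] [DecidableEq ι]
    [NonUnitalNonAssocSemiring R] (M : Matrix ι ι R) (π : V → ι) (w : ι → R) :
    M.submatrix π π *ᵥ (w ∘ π) = (M *ᵥ fun t => #{u | π u = t} • w t) ∘ π := by
  ext u
  simp only [mulVec, dotProduct, submatrix_apply, Function.comp_apply]
  rw [← sum_fiberwise' univ π (fun t => M (π u) t * w t)]
  refine sum_congr rfl fun t _ => ?_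
  rw [sum_const, mul_smul_comm]

instance (n a b : ℕ) : DecidableRel (bipG n a b).Adj := fun _ _ =>
  inferInstanceAs (Decidable (_ ∨ _))

def bipBlock (n a b i : ℕ) : Fin 4 :=
  if i < a then 0 else if i < n then 1 else if i < 2*n - b then 2 else 3

def bipQuotient : Matrix (Fin 4) (Fin 4) ℝ :=
  !![0, 0, 1, 1; 0, 0, 1, 0; 1, 1, 0, 0; 1, 0, 0, 0]

theorem adjMatrix_bipG {n a b : ℕ} (ha : a ≤ n) :
    (bipG n a b).adjMatrix ℝ =
      bipQuotient.submatrix (bipBlock n a b ∘ Fin.val) (bipBlock n a b ∘ Fin.val) := by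
  ext u v
  have hadj : (bipG n a b).Adj u v ↔ (u.val < n ∧ n ≤ v.val ∧ (u.val < a ∨ v.val < 2*n - b)) ∨
      (v.val < n ∧ n ≤ u.val ∧ (v.val < a ∨ u.val < 2*n - b)) := Iff.rfl
  simp only [adjMatrix_apply, submatrix_apply, Function.comp_apply, bipBlock, hadj]
  split_ifs <;> simp [bipQuotient] <;> omega

theorem card_filter_fin_val (m : ℕ) (P : ℕ → Prop) [DecidablePred P] :
    #{u : Fin m | P u} = #{i ∈ range m | P i} := by
  rw [← card_map Fin.valEmbedding]
  congr 1
  ext t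
  simp [Fin.exists_iff, and_comm]

theorem card_filter_range_of_iff_Ico {m c d : ℕ} {P : ℕ → Prop} [DecidablePred P] (hd : d ≤ m)
    (hP : ∀ i < m, P i ↔ c ≤ i ∧ i < d) : #{i ∈ range m | P i} = d - c := by
  rw [← Nat.card_Ico]
  congr 1
  ext i
  simp only [mem_filter, mem_range, mem_Ico]
  constructor
  · rintro ⟨hi, h⟩; exact (hP i hi).1 h
  · rintro h; exact ⟨by omega, (hP i (by omega)).2 h⟩

theorem card_bipBlock_fiber {n a b : ℕ} (ha : a ≤ n) (hb : b ≤ n) (t : Fin 4) :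
    #{u : Fin (2*n) | bipBlock n a b u = t} = ![a, n - a, n - b, b] t := by
  rw [card_filter_fin_val (2*n) (fun i => bipBlock n a b i = t)]
  fin_cases t
  · exact (card_filter_range_of_iff_Ico (c := 0) (d := a) (by omega) fun i _ => by
      simp only [bipBlock]; split_ifs <;> simp <;> omega).trans (Nat.sub_zero a)
  · exact card_filter_range_of_iff_Ico (c := a) (d := n) (by omega) fun i _ => by
      simp only [bipBlock]; split_ifs <;> simp <;> omega
  · exact (card_filter_range_of_iff_Ico (c := n) (d := 2*n - b) (by omega) fun i _ => by
      simp only [bipBlock]; split_ifs <;> simp <;> omega).trans (by simp; omega)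
  · exact (card_filter_range_of_iff_Ico (c := 2*n - b) (d := 2*n) le_rfl fun i _ => by
      simp only [bipBlock]; split_ifs <;> simp <;> omega).trans (by simp; omega)

theorem adjMatrix_bipG_mulVec_comp {n a b : ℕ} (ha : a ≤ n) (hb : b ≤ n) (w : Fin 4 → ℝ) :
    (bipG n a b).adjMatrix ℝ *ᵥ (w ∘ bipBlock n a b ∘ Fin.val) =
      (bipQuotient *ᵥ fun t => (![a, n - a, n - b, b] t : ℝ) * w t) ∘
        bipBlock n a b ∘ Fin.val := by
  rw [adjMatrix_bipG ha, submatrix_mulVec_comp_s1]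
  congr 2
  ext t
  simp only [Function.comp_apply, card_bipBlock_fiber ha hb, nsmul_eq_mul]

theorem specRad_bipG_eq {n a b : ℕ} (ha : 0 < a) (han : a ≤ n) (hb : 0 < b) (hbn : b < n)
    {ν : ℝ} (hν : 0 < ν) (hab : a * b < ν ^ 2)
    (hquartic : ν ^ 4 - (a * n + (n - a) * (n - b)) * ν ^ 2 + a * b * (n - a) * (n - b) = 0) :
    specRad (bipG n a b) = ν := by
  have : Nonempty (Fin (2*n)) := ⟨⟨0, by omega⟩⟩
  -- Solve the quotient system row by row; the row of `Y₁` is then the quartic.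
  set w : Fin 4 → ℝ :=
    ![ν ^ 2 * (n - b), (n - b) * (ν ^ 2 - a * b), ν * (ν ^ 2 - a * b), a * ν * (n - b)]
  have hnb : (0 : ℝ) < n - b := by rw [sub_pos]; exact_mod_cast hbn
  have hgap : 0 < ν ^ 2 - a * b := sub_pos.2 hab
  have ha' : (0 : ℝ) < a := by exact_mod_cast ha
  have hw_pos : ∀ t, 0 < w t := by
    intro t
    fin_cases t <;> simp [w] <;> positivity
  have hw_eig : (bipQuotient *ᵥ fun t => (![a, n - a, n - b, b] t : ℝ) * w t) = ν • w := by
    ext t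
    fin_cases t <;> simp [w, bipQuotient, mulVec, dotProduct, Fin.sum_univ_four] <;>
      push_cast [Nat.cast_sub han, Nat.cast_sub hbn.le]
    · ring
    · ring
    · linear_combination -hquartic
    · ring
  refine specRad_eq_of_adjMatrix_mulVec_eq _ (v := w ∘ bipBlock n a b ∘ Fin.val)
    (fun i => hw_pos _) ?_
  rw [adjMatrix_bipG_mulVec_comp han hbn.le, hw_eig]
  rfl

noncomputable def largerRoot (T D : ℝ) : ℝ := (T + √(T ^ 2 - 4 * D)) / 2

theorem largerRoot_nonneg {T : ℝ} (D : ℝ) (hT : 0 ≤ T) : 0 ≤ largerRoot T D :=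
  div_nonneg (add_nonneg hT (Real.sqrt_nonneg _)) zero_le_two

theorem largerRoot_sq_sub {T D : ℝ} (h : 4 * D ≤ T ^ 2) :
    largerRoot T D ^ 2 - T * largerRoot T D + D = 0 := by
  unfold largerRoot
  linear_combination Real.sq_sqrt (sub_nonneg.2 h) / 4

theorem lt_largerRoot_of_neg {T D y : ℝ} (hy : y ^ 2 - T * y + D < 0) : y < largerRoot T D := by
  have : 2 * y - T < √(T ^ 2 - 4 * D) := Real.lt_sqrt_of_sq_lt (by linarith)
  unfold largerRoot
  linarith

theorem largerRoot_lt_largerRoot {T₁ T₂ D₁ D₂ : ℝ} (hT₁ : 0 ≤ T₁) (hT : T₁ < T₂) (hD : D₂ ≤ D₁) :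
    largerRoot T₁ D₁ < largerRoot T₂ D₂ := by
  have : √(T₁ ^ 2 - 4 * D₁) ≤ √(T₂ ^ 2 - 4 * D₂) := Real.sqrt_le_sqrt (by nlinarith)
  unfold largerRoot
  linarith

theorem specRad_bipG {n a b : ℕ} (ha : 0 < a) (han : a ≤ n) (hb : 0 < b) (hbn : b < n) :
    specRad (bipG n a b) =
      √(largerRoot (a * n + (n - a) * (n - b)) (a * b * (n - a) * (n - b))) := by
  set T : ℝ := a * n + (n - a) * (n - b)
  set D : ℝ := a * b * (n - a) * (n - b)
  have hnb : (0 : ℝ) < n - b := by rw [sub_pos]; exact_mod_cast hbn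
  have ha' : (0 : ℝ) < a := by exact_mod_cast ha
  have hb' : (0 : ℝ) < b := by exact_mod_cast hb
  have hneg : (a * b : ℝ) ^ 2 - T * (a * b) + D < 0 := by
    have : (a * b : ℝ) ^ 2 - T * (a * b) + D = -(a ^ 2 * b * (n - b)) := by ring
    rw [this, neg_lt_zero]
    positivity
  have hx := lt_largerRoot_of_neg hneg
  have hx0 : 0 < largerRoot T D := (mul_pos ha' hb').trans hx
  refine specRad_bipG_eq ha han hb hbn (Real.sqrt_pos.2 hx0) ?_ ?_
  · rwa [Real.sq_sqrt hx0.le]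
  · rw [show √(largerRoot T D) ^ 4 = (√(largerRoot T D) ^ 2) ^ 2 by ring, Real.sq_sqrt hx0.le]
    exact largerRoot_sq_sub (by nlinarith [sq_nonneg (2 * (a * b : ℝ) - T)])

theorem stmt1_general (n k p : ℕ) (hk : 2 ≤ k) (hp1 : k+1 ≤ p) (hp2 : p ≤ n-1) :
    specRad (bipG n (p-1) (p-k+1)) < specRad (bipG n (k-1) 1) := by
  rw [specRad_bipG (by omega) (by omega) (by omega) (by omega),
    specRad_bipG (by omega) (by omega) (by omega) (by omega)]
  have hk' : (2 : ℝ) ≤ k := by exact_mod_cast hk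
  have hkp : (k : ℝ) + 1 ≤ p := by exact_mod_cast hp1
  have hpn : (p : ℝ) + 1 ≤ n := by exact_mod_cast (by omega : p + 1 ≤ n)
  push_cast [Nat.cast_sub (by omega : 1 ≤ p), Nat.cast_sub (by omega : k ≤ p),
    Nat.cast_sub (by omega : 1 ≤ k)]
  -- The drop in `T` and the gains in both factors of `D` all equal `(p - k) * (n - p)`.
  have hgap : 0 < (p - k) * (n - p : ℝ) := by apply mul_pos <;> linarith
  refine Real.sqrt_lt_sqrt (largerRoot_nonneg _ (by nlinarith))
    (largerRoot_lt_largerRoot (by nlinarith) (by nlinarith) ?_)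
  have h₁ : (k - 1) * (n - 1) ≤ (p - 1) * (n - (p - k + 1) : ℝ) := by nlinarith
  have h₂ : n - (k - 1) ≤ (p - k + 1) * (n - (p - 1) : ℝ) := by nlinarith
  calc (k - 1) * 1 * (n - (k - 1)) * (n - 1 : ℝ) = ((k - 1) * (n - 1)) * (n - (k - 1)) := by ring
    _ ≤ ((p - 1) * (n - (p - k + 1))) * ((p - k + 1) * (n - (p - 1))) :=
      mul_le_mul h₁ h₂ (by linarith) (by nlinarith)
    _ = (p - 1) * (p - k + 1) * (n - (p - 1)) * (n - (p - k + 1)) := by ring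

/-- ρ(K_{p-1,n+k-p+1} ⊔ ̂K_{n-p+1,p-k+1}) < ρ(B_{n,k}). -/
theorem stmt1 (n k p : ℕ) (hk : 2 ≤ k) (hn : 2*k ≤ n) (hp1 : k+1 ≤ p) (hp2 : p ≤ n-1) :
    specRad (bipG n (p-1) (p-k+1)) < specRad (bipG n (k-1) 1) :=
  stmt1_general n k p hk hp1 hp2
end

section
/- Let G be a graph on vertex set [n] and let x, y be two vertices of G. Then the spectral radius of the shifted graph S_{xy}(G) is at least the spectral radius of G. -/
/-!
Rayleigh quotient argument. Take an eigenvector `v` of `G` for an eigenvalue `μ`, and `u = |v|`,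
so `μ ‖v‖² ≤ uᵀ A_G u`. Writing `uᵀ A u = 2 ∑_{ab ∈ E} u_a u_b`, the shift maps `E(G)` bijectively
onto `E(S_{xy} G)` and, if `u_y ≤ u_x`, does not decrease any term, as it only replaces `y` by `x`.
If `u_x < u_y`, relabel `G` by the transposition `(x y)`: this does not change `S_{xy} G`, and
reduces to the first case for `u ∘ (x y)`. Finally `wᵀ A_S w ≤ ρ(S) ‖w‖²` for every `w`, because
`ρ(S) I - A_S` is positive semidefinite.
-/

open SimpleGraph

open Matrix Finset

theorem Matrix.IsHermitian.dotProduct_mulVec_le {ι : Type*} [Fintype ι] [DecidableEq ι]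
    {A : Matrix ι ι ℝ} (hA : A.IsHermitian) {r : ℝ} (hr : ∀ μ ∈ spectrum ℝ A, μ ≤ r)
    (u : ι → ℝ) : u ⬝ᵥ A *ᵥ u ≤ r * (u ⬝ᵥ u) := by
  have hpsd : (algebraMap ℝ _ r - A).PosSemidef := by
    refine posSemidef_iff_isHermitian_and_spectrum_nonneg.2 ⟨(isHermitian_diagonal _).sub hA, ?_⟩
    rw [← spectrum.singleton_sub_eq]
    rintro _ ⟨_, rfl, μ, hμ, rfl⟩
    exact sub_nonneg.2 (hr μ hμ)
  have := hpsd.dotProduct_mulVec_nonneg u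
  rw [Algebra.algebraMap_eq_smul_one, sub_mulVec, smul_mulVec, one_mulVec, dotProduct_sub,
    dotProduct_smul] at this
  simpa [sub_nonneg] using this

theorem Matrix.dotProduct_mulVec_le_abs {ι R : Type*} [Fintype ι] [CommRing R] [LinearOrder R]
    [IsStrictOrderedRing R] {A : Matrix ι ι R} (hA : ∀ i j, 0 ≤ A i j) (u : ι → R) :
    u ⬝ᵥ A *ᵥ u ≤ |u| ⬝ᵥ A *ᵥ |u| := by
  simp only [dotProduct, mulVec, mul_sum, Pi.abs_apply]
  refine sum_le_sum fun i _ => sum_le_sum fun j _ => ?_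
  calc u i * (A i j * u j) ≤ |u i * (A i j * u j)| := le_abs_self _
    _ = |u i| * (A i j * |u j|) := by rw [abs_mul, abs_mul, abs_of_nonneg (hA i j)]

theorem Sym2.mem_map_equiv {α β : Type*} (f : α ≃ β) {b : β} {e : Sym2 α} :
    b ∈ e.map f ↔ f.symm b ∈ e := by
  rw [Sym2.mem_map]
  exact ⟨fun ⟨a, ha, hab⟩ => hab ▸ (f.symm_apply_apply a).symm ▸ ha,
    fun h => ⟨_, h, f.apply_symm_apply b⟩⟩

section Swap
variable {V : Type*} [DecidableEq V] (x y : V)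

local notation "σ" => Equiv.swap x y

theorem Sym2.map_swap_map_swap (e : Sym2 V) : (e.map σ).map σ = e := by
  induction e using Sym2.ind
  simp

theorem Sym2.mem_map_swap_left {e : Sym2 V} : x ∈ e.map σ ↔ y ∈ e := by
  rw [Sym2.mem_map_equiv, Equiv.symm_swap, Equiv.swap_apply_left]

theorem Sym2.mem_map_swap_right {e : Sym2 V} : y ∈ e.map σ ↔ x ∈ e := by
  rw [Sym2.mem_map_equiv, Equiv.symm_swap, Equiv.swap_apply_right]

theorem Sym2.map_swap_eq_self {e : Sym2 V} (h : x ∈ e ↔ y ∈ e) : e.map σ = e := by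
  by_cases hx : x ∈ e
  · obtain rfl | hxy := eq_or_ne x y
    · rw [Equiv.swap_self, Equiv.coe_refl, Sym2.map_id, id]
    · rw [(Sym2.mem_and_mem_iff hxy).1 ⟨hx, h.1 hx⟩, Sym2.map_mk, Equiv.swap_apply_left,
        Equiv.swap_apply_right, Sym2.eq_swap]
  · refine (Sym2.map_congr fun a ha => ?_).trans (congrFun Sym2.map_id e)
    exact Equiv.swap_apply_of_ne_of_ne (ne_of_mem_of_not_mem ha hx)
      (ne_of_mem_of_not_mem ha (h.not.1 hx))

end Swap

namespace SimpleGraph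

theorem mem_edgeSet_comap {V W : Type*} (G : SimpleGraph W) (f : V → W) {e : Sym2 V} :
    e ∈ (G.comap f).edgeSet ↔ e.map f ∈ G.edgeSet := by
  induction e using Sym2.ind
  simp

section QuadraticForm
variable {V R : Type*}

def pairProd [CommMonoid R] (u : V → R) : Sym2 V → R :=
  Sym2.lift ⟨fun a b => u a * u b, fun _ _ => mul_comm _ _⟩

theorem pairProd_le_pairProd_map [CommSemiring R] [PartialOrder R] [IsOrderedRing R]
    {u : V → R} (hu : 0 ≤ u) {f : V → V} {e : Sym2 V} (h : ∀ a ∈ e, u a ≤ u (f a)) :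
    pairProd u e ≤ pairProd u (e.map f) := by
  induction e using Sym2.ind with
  | _ a b =>
    simp only [pairProd, Sym2.map_mk, Sym2.lift_mk]
    exact mul_le_mul (h a (Sym2.mem_mk_left a b)) (h b (Sym2.mem_mk_right a b)) (hu b) (hu (f a))

variable [Fintype V] (G : SimpleGraph V) [DecidableRel G.Adj]

theorem sum_dart_edge {M : Type*} [AddCommMonoid M] [DecidableEq V] (f : Sym2 V → M) :
    ∑ d : G.Dart, f d.edge = 2 • ∑ e ∈ G.edgeFinset, f e := by
  rw [← sum_fiberwise_of_maps_to (g := Dart.edge) (t := G.edgeFinset) (by simp), smul_sum]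
  refine sum_congr rfl fun e he => ?_
  rw [sum_congr rfl fun d hd => by rw [(mem_filter.1 hd).2], sum_const,
    G.dart_edge_fiber_card e (mem_edgeFinset.1 he)]

theorem dotProduct_adjMatrix_mulVec_self [CommSemiring R] [DecidableEq V] (u : V → R) :
    u ⬝ᵥ G.adjMatrix R *ᵥ u = 2 * ∑ e ∈ G.edgeFinset, pairProd u e := by
  rw [two_mul, ← two_nsmul, ← sum_dart_edge, dotProduct_mulVec_adjMatrix, ← sum_product',
    univ_product_univ, ← sum_filter]
  exact sum_bij' (fun p hp => ⟨p, (mem_filter.1 hp).2⟩) (fun d _ => d.toProd)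
    (by simp) (by simp) (by simp) (by simp) (by simp [pairProd])

theorem dotProduct_adjMatrix_comap_mulVec {W : Type*} [Fintype W] [CommSemiring R] (f : W ≃ V)
    [DecidableRel (G.comap f).Adj] (u : V → R) :
    (u ∘ f) ⬝ᵥ (G.comap f).adjMatrix R *ᵥ (u ∘ f) = u ⬝ᵥ G.adjMatrix R *ᵥ u := by
  have : (G.comap f).adjMatrix R = (G.adjMatrix R).submatrix f f := by
    ext i j
    simp [adjMatrix_apply]
  rw [this, submatrix_mulVec_equiv, Function.comp_assoc, f.self_comp_symm, Function.comp_id,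
    comp_equiv_dotProduct_comp_equiv]

end QuadraticForm

end SimpleGraph

section Shift
variable {V : Type*} [DecidableEq V] (G : SimpleGraph V) (x y : V)

local notation "σ" => Equiv.swap x y

theorem shiftMap_eq_map_swap {e : Sym2 V} (he : x ∉ e) : shiftMap x y e = e.map σ :=
  Sym2.map_congr fun a ha => by rw [Equiv.swap_apply_def, if_neg (ne_of_mem_of_not_mem ha he)]

open scoped Classical in
noncomputable def shiftEdge (e : Sym2 V) : Sym2 V :=
  if y ∈ e ∧ x ∉ e ∧ e.map σ ∉ G.edgeSet then e.map σ else e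

theorem shiftGraph_eq_fromEdgeSet :
    shiftGraph G x y = fromEdgeSet (shiftEdge G x y '' G.edgeSet) := by
  refine congrArg _ (Set.image_congr fun e _ => ?_)
  by_cases he : x ∈ e
  · simp [shiftEdge, he]
  · rw [shiftEdge, shiftMap_eq_map_swap x y he]

theorem injOn_shiftEdge : Set.InjOn (shiftEdge G x y) G.edgeSet := by
  intro e he e' he' h
  unfold shiftEdge at h
  split_ifs at h with c _ c'
  · exact Sym2.map.injective (Equiv.injective _) h
  · exact absurd (h ▸ he') c.2.2
  · exact absurd (h.symm ▸ he) c'.2.2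
  · exact h

theorem edgeSet_shiftGraph : (shiftGraph G x y).edgeSet = shiftEdge G x y '' G.edgeSet := by
  rw [shiftGraph_eq_fromEdgeSet, edgeSet_fromEdgeSet, sdiff_eq_left, Set.disjoint_left]
  rintro _ ⟨e, he, rfl⟩ hd
  rw [Sym2.mem_diagSet, shiftEdge] at hd
  split_ifs at hd
  · exact G.not_isDiag_of_mem_edgeSet he ((Sym2.isDiag_map (Equiv.injective _)).1 hd)
  · exact G.not_isDiag_of_mem_edgeSet he hd

theorem mem_edgeSet_shiftGraph {e : Sym2 V} :
    e ∈ (shiftGraph G x y).edgeSet ↔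
      (e ∈ G.edgeSet ∧ (y ∈ e → x ∉ e → e.map σ ∈ G.edgeSet)) ∨
        (x ∈ e ∧ y ∉ e ∧ e ∉ G.edgeSet ∧ e.map σ ∈ G.edgeSet) := by
  rw [edgeSet_shiftGraph]
  constructor
  · rintro ⟨e, he, rfl⟩
    unfold shiftEdge
    split_ifs with c
    · rw [Sym2.mem_map_swap_left, Sym2.mem_map_swap_right, Sym2.map_swap_map_swap]
      exact Or.inr ⟨c.1, c.2.1, c.2.2, he⟩
    · exact Or.inl ⟨he, by tauto⟩
  · rintro (⟨he, h⟩ | ⟨hx, hy, he, hσ⟩)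
    · exact ⟨e, he, by rw [shiftEdge, if_neg (by tauto)]⟩
    · refine ⟨e.map σ, hσ, ?_⟩
      rw [shiftEdge, if_pos, Sym2.map_swap_map_swap]
      rw [Sym2.mem_map_swap_left, Sym2.mem_map_swap_right, Sym2.map_swap_map_swap]
      exact ⟨hx, hy, he⟩

/-- The shift only sees `N(x) ∪ N(y)` and `N(x) ∩ N(y)`, which the transposition preserves. -/
theorem shiftGraph_comap_swap : shiftGraph (G.comap σ) x y = shiftGraph G x y := by
  refine edgeSet_injective (Set.ext fun e => ?_)
  simp only [mem_edgeSet_shiftGraph, mem_edgeSet_comap, Sym2.map_swap_map_swap]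
  by_cases h : x ∈ e ↔ y ∈ e
  · rw [Sym2.map_swap_eq_self x y h]
  · tauto

variable [Fintype V] [DecidableRel G.Adj] [DecidableRel (shiftGraph G x y).Adj]

theorem edgeFinset_shiftGraph :
    (shiftGraph G x y).edgeFinset = G.edgeFinset.image (shiftEdge G x y) := by
  apply coe_injective
  rw [coe_edgeFinset, coe_image, coe_edgeFinset, edgeSet_shiftGraph]

theorem dotProduct_adjMatrix_mulVec_le_shiftGraph {u : V → ℝ} (hu : 0 ≤ u) (h : u y ≤ u x) :
    u ⬝ᵥ G.adjMatrix ℝ *ᵥ u ≤ u ⬝ᵥ (shiftGraph G x y).adjMatrix ℝ *ᵥ u := by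
  rw [dotProduct_adjMatrix_mulVec_self, dotProduct_adjMatrix_mulVec_self, edgeFinset_shiftGraph,
    sum_image fun e he e' he' => injOn_shiftEdge G x y (mem_edgeFinset.1 he) (mem_edgeFinset.1 he')]
  gcongr with e
  unfold shiftEdge
  split_ifs with c
  · refine pairProd_le_pairProd_map hu fun a ha => ?_
    obtain rfl | hay := eq_or_ne a y
    · rw [Equiv.swap_apply_right]
      exact h
    · rw [Equiv.swap_apply_of_ne_of_ne (ne_of_mem_of_not_mem ha c.2.1) hay]
  · exact le_rfl

theorem exists_dotProduct_self_eq_and_le_shiftGraph {u : V → ℝ} (hu : 0 ≤ u) :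
    ∃ w : V → ℝ, w ⬝ᵥ w = u ⬝ᵥ u ∧
      u ⬝ᵥ G.adjMatrix ℝ *ᵥ u ≤ w ⬝ᵥ (shiftGraph G x y).adjMatrix ℝ *ᵥ w := by
  classical
  rcases le_total (u y) (u x) with h | h
  · exact ⟨u, rfl, dotProduct_adjMatrix_mulVec_le_shiftGraph G x y hu h⟩
  refine ⟨u ∘ σ, comp_equiv_dotProduct_comp_equiv _ _ _, ?_⟩
  calc u ⬝ᵥ G.adjMatrix ℝ *ᵥ u = (u ∘ σ) ⬝ᵥ (G.comap σ).adjMatrix ℝ *ᵥ (u ∘ σ) :=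
        (dotProduct_adjMatrix_comap_mulVec G σ u).symm
    _ ≤ (u ∘ σ) ⬝ᵥ (shiftGraph G x y).adjMatrix ℝ *ᵥ (u ∘ σ) := by
        convert dotProduct_adjMatrix_mulVec_le_shiftGraph (G.comap σ) x y (u := u ∘ σ)
          (fun i => hu (σ i)) (by simpa using h) using 3
        rw [shiftGraph_comap_swap]
        congr!

end Shift

theorem specRad_eq {V : Type*} [Fintype V] [DecidableEq V] (G : SimpleGraph V)
    [DecidableRel G.Adj] : specRad G = sSup (spectrum ℝ (G.adjMatrix ℝ)) := by
  simp only [specRad, Module.End.hasEigenvalue_iff_mem_spectrum, spectrum_toLin', Set.ofPred_mem_eq]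
  congr!

theorem le_specRad_shiftGraph_of_mem_spectrum {V : Type*} [Fintype V] [DecidableEq V]
    (G : SimpleGraph V) [DecidableRel G.Adj] (x y : V) {μ : ℝ}
    (hμ : μ ∈ spectrum ℝ (G.adjMatrix ℝ)) : μ ≤ specRad (shiftGraph G x y) := by
  classical
  have hμ' : Module.End.HasEigenvalue (toLin' (G.adjMatrix ℝ)) μ :=
    Module.End.hasEigenvalue_iff_mem_spectrum.2 (by rwa [spectrum_toLin'])
  obtain ⟨v, hv, hv0⟩ := hμ'.exists_hasEigenvector
  rw [Module.End.mem_eigenspace_iff, toLin'_apply] at hv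
  obtain ⟨w, hw, hle⟩ := exists_dotProduct_self_eq_and_le_shiftGraph G x y (abs_nonneg v)
  have hρ := (isHermitian_adjMatrix ℝ (shiftGraph G x y)).dotProduct_mulVec_le
    (fun ν hν => le_csSup finite_real_spectrum.bddAbove hν) w
  have hv_pos : 0 < v ⬝ᵥ v :=
    lt_of_le_of_ne (sum_nonneg fun i _ => mul_self_nonneg (v i))
      (Ne.symm (dotProduct_self_eq_zero.not.2 hv0))
  refine le_of_mul_le_mul_right ?_ hv_pos
  calc μ * (v ⬝ᵥ v) = v ⬝ᵥ G.adjMatrix ℝ *ᵥ v := by rw [hv, dotProduct_smul, smul_eq_mul]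
    _ ≤ |v| ⬝ᵥ G.adjMatrix ℝ *ᵥ |v| :=
        dotProduct_mulVec_le_abs (fun i j => by rw [adjMatrix_apply]; positivity) v
    _ ≤ w ⬝ᵥ (shiftGraph G x y).adjMatrix ℝ *ᵥ w := hle
    _ ≤ specRad (shiftGraph G x y) * (w ⬝ᵥ w) := specRad_eq (shiftGraph G x y) ▸ hρ
    _ = specRad (shiftGraph G x y) * (v ⬝ᵥ v) := by
        rw [hw]
        simp [dotProduct, abs_mul_abs_self]

/-- Csikvári: the shift does not decrease the spectral radius. -/
theorem stmt6 (n : ℕ) (G : SimpleGraph (Fin n)) (x y : Fin n) :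
    specRad G ≤ specRad (shiftGraph G x y) := by
  classical
  rw [specRad_eq G]
  exact csSup_le ⟨_, (isHermitian_adjMatrix ℝ G).eigenvalues_mem_spectrum_real x⟩
    fun μ hμ => le_specRad_shiftGraph_of_mem_spectrum G x y hμ
end

section
/- Let G be a connected graph on vertex set [n] and let x, y be two vertices of G. Then ρ(S_{xy}(G)) > ρ(G) unless S_{xy}(G) is isomorphic to G. -/
open SimpleGraph

/-!
Let `M` be the set of vertices `v ≠ x` adjacent to `y` but not to `x`: the shift replaces the
edges `vy`, `v ∈ M`, by `vx`. Afterwards `x` is joined to the union and `y` to the intersection of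
the two old neighbourhoods, so `S_{xy}(G) ≅ S_{yx}(G)` through the transposition `(x y)`. Hence if
`M` is empty, or if no vertex moves in the other direction, the shift is trivial up to isomorphism.

Otherwise let `f > 0` be the Perron vector of `G`, and by the symmetry just described assume
`f y ≤ f x`. The adjacency matrix changes by `a bᵀ + b aᵀ` with `a = e_x - e_y` and `b = 1_M`, so
`fᵀ A' f = ρ(G) ‖f‖² + 2 (f x - f y) ∑_M f ≥ ρ(G) ‖f‖²` and `ρ(S_{xy}(G)) ≥ ρ(G)`. Equality would
make `f` a maximiser of the Rayleigh quotient of `A'`, hence an eigenvector of `A'` for `ρ(G)`;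
but `(A' f) y = ρ(G) f y - ∑_M f`.
-/

open Matrix

namespace Matrix

open scoped MatrixOrder

variable {n : Type*} [Fintype n] [DecidableEq n] {A : Matrix n n ℝ} {r : ℝ}

theorem IsHermitian.posSemidef_smul_one_sub (hA : A.IsHermitian)
    (hr : ∀ μ ∈ spectrum ℝ A, μ ≤ r) : (r • 1 - A).PosSemidef := by
  have := le_algebraMap_of_spectrum_le hr hA.isSelfAdjoint
  rwa [Algebra.algebraMap_eq_smul_one, le_iff] at this

theorem IsHermitian.dotProduct_mulVec_le_of_spectrum_le (hA : A.IsHermitian)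
    (hr : ∀ μ ∈ spectrum ℝ A, μ ≤ r) (v : n → ℝ) : v ⬝ᵥ A *ᵥ v ≤ r * (v ⬝ᵥ v) := by
  have := (hA.posSemidef_smul_one_sub hr).dotProduct_mulVec_nonneg v
  simp only [star_trivial, sub_mulVec, smul_mulVec, one_mulVec, dotProduct_sub, dotProduct_smul,
    smul_eq_mul] at this
  linarith

theorem IsHermitian.mulVec_eq_smul_of_dotProduct_mulVec_eq (hA : A.IsHermitian)
    (hr : ∀ μ ∈ spectrum ℝ A, μ ≤ r) {v : n → ℝ} (hv : v ⬝ᵥ A *ᵥ v = r * (v ⬝ᵥ v)) :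
    A *ᵥ v = r • v := by
  have h := ((hA.posSemidef_smul_one_sub hr).dotProduct_mulVec_zero_iff v).1 (by
    simp only [star_trivial, sub_mulVec, smul_mulVec, one_mulVec, dotProduct_sub, dotProduct_smul,
      smul_eq_mul, hv, sub_self])
  rw [sub_mulVec, smul_mulVec, one_mulVec, sub_eq_zero] at h
  exact h.symm

end Matrix

namespace SimpleGraph

section Perron

variable {V : Type*} [Fintype V] {G : SimpleGraph V} [DecidableRel G.Adj]

theorem Connected.pos_of_adjMatrix_mulVec_eq_smul (hG : G.Connected) {f : V → ℝ} {c : ℝ}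
    (hf : 0 ≤ f) (hf0 : f ≠ 0) (hfc : G.adjMatrix ℝ *ᵥ f = c • f) (i : V) : 0 < f i := by
  have hzero_adj : ∀ {u w}, G.Adj u w → f u = 0 → f w = 0 := fun {u w} huw hu => by
    have hsum : ∑ j ∈ G.neighborFinset u, f j = 0 := by
      rw [← adjMatrix_mulVec_apply, hfc, Pi.smul_apply, hu, smul_zero]
    exact (Finset.sum_eq_zero_iff_of_nonneg fun j _ => hf j).1 hsum w (by simpa using huw)
  refine (hf i).lt_of_ne fun hi => hf0 (funext fun j => ?_)
  obtain ⟨p⟩ := hG.preconnected i j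
  induction p with
  | nil => exact hi.symm
  | cons h _ ih => exact ih (hzero_adj h hi.symm).symm

variable [DecidableEq V]

variable (G) in
theorem specRad_eq_sSup_spectrum : specRad G = sSup (spectrum ℝ (G.adjMatrix ℝ)) := by
  -- `specRad` is stated with the classical `DecidableRel` instance, hence `congr!`.
  simp_rw [specRad, Module.End.hasEigenvalue_iff_mem_spectrum, Set.ofPred_mem_eq, spectrum_toLin']
  congr!

theorem le_specRad_of_mem_spectrum {μ : ℝ} (hμ : μ ∈ spectrum ℝ (G.adjMatrix ℝ)) :
    μ ≤ specRad G := by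
  rw [specRad_eq_sSup_spectrum]
  exact le_csSup finite_real_spectrum.bddAbove hμ

variable (G) in
theorem specRad_mem_spectrum [Nonempty V] : specRad G ∈ spectrum ℝ (G.adjMatrix ℝ) := by
  rw [specRad_eq_sSup_spectrum]
  refine Set.Nonempty.csSup_mem ?_ finite_real_spectrum
  exact ⟨_, (G.isHermitian_adjMatrix ℝ).eigenvalues_mem_spectrum_real (Classical.arbitrary V)⟩

theorem specRad_congr {W : Type*} [Fintype W] [DecidableEq W] {H : SimpleGraph W} (e : G ≃g H) :
    specRad G = specRad H := by
  classical
  rw [specRad_eq_sSup_spectrum, specRad_eq_sSup_spectrum, ← e.reindex_adjMatrix ℝ]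
  exact congrArg sSup (AlgEquiv.spectrum_eq (reindexAlgEquiv ℝ ℝ e.toEquiv) _).symm

theorem Connected.exists_pos_eigenvector (hG : G.Connected) :
    ∃ f : V → ℝ, (∀ i, 0 < f i) ∧ G.adjMatrix ℝ *ᵥ f = specRad G • f := by
  have := hG.nonempty
  set A := G.adjMatrix ℝ
  have hA : A.IsHermitian := G.isHermitian_adjMatrix ℝ
  have hρ : ∀ μ ∈ spectrum ℝ A, μ ≤ specRad G := fun μ => le_specRad_of_mem_spectrum
  obtain ⟨u, hu, hu0⟩ := (Module.End.hasEigenvalue_iff_mem_spectrum.2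
    ((spectrum_toLin' A).symm ▸ G.specRad_mem_spectrum)).exists_hasEigenvector
  rw [Module.End.mem_eigenspace_iff, toLin'_apply] at hu
  set f : V → ℝ := fun i => |u i|
  have hff : f ⬝ᵥ f = u ⬝ᵥ u := by simp [f, dotProduct, abs_mul_abs_self]
  -- `|u|` does at least as well as `u` in the Rayleigh quotient, so it is a maximiser too.
  have hle : u ⬝ᵥ A *ᵥ u ≤ f ⬝ᵥ A *ᵥ f := by
    simp only [A, dotProduct_mulVec_adjMatrix]
    gcongr with i _ j _
    split_ifs
    · exact (le_abs_self _).trans (abs_mul _ _).le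
    · rfl
  have hfA : f ⬝ᵥ A *ᵥ f = specRad G * (f ⬝ᵥ f) := by
    refine le_antisymm (hA.dotProduct_mulVec_le_of_spectrum_le hρ f) ?_
    calc specRad G * (f ⬝ᵥ f) = u ⬝ᵥ A *ᵥ u := by rw [hff, hu, dotProduct_smul, smul_eq_mul]
      _ ≤ f ⬝ᵥ A *ᵥ f := hle
  have hf0 : f ≠ 0 := fun h => hu0 (funext fun i => abs_eq_zero.1 (congrFun h i))
  have hAf := hA.mulVec_eq_smul_of_dotProduct_mulVec_eq hρ hfA
  exact ⟨f, hG.pos_of_adjMatrix_mulVec_eq_smul (fun i => abs_nonneg (u i)) hf0 hAf, hAf⟩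

end Perron

section Shift

variable {V : Type*} [DecidableEq V] (G : SimpleGraph V) (x y : V)

/-- The shift replaces the edge `vy` by `vx`. -/
def ShiftMoves (v : V) : Prop := v ≠ x ∧ G.Adj v y ∧ ¬G.Adj v x

theorem shiftGraph_adj {u v : V} : (shiftGraph G x y).Adj u v ↔
    (G.Adj u v ∧ ¬(u = y ∧ G.ShiftMoves x y v ∨ v = y ∧ G.ShiftMoves x y u)) ∨
      (u = x ∧ G.ShiftMoves x y v ∨ v = x ∧ G.ShiftMoves x y u) := by
  rw [shiftGraph, fromEdgeSet_adj, Set.mem_image]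
  constructor
  · rintro ⟨⟨e, he, hFe⟩, huv⟩
    induction e using Sym2.ind with | _ a b => ?_
    split_ifs at hFe with h <;>
      simp only [shiftMap, Sym2.map_mk, Sym2.mem_iff, mem_edgeSet, Sym2.eq_iff, ShiftMoves]
        at h hFe he ⊢ <;>
      grind [G.adj_comm, G.irrefl]
  · rintro (⟨huv, hnot⟩ | ⟨rfl, hv⟩ | ⟨rfl, hu⟩)
    on_goal 1 => refine ⟨⟨s(u, v), huv, ?_⟩, huv.ne⟩
    on_goal 2 => refine ⟨⟨s(v, y), hv.2.1, ?_⟩, hv.1.symm⟩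
    on_goal 3 => refine ⟨⟨s(u, y), hu.2.1, ?_⟩, hu.1⟩
    all_goals
      split_ifs with h <;>
        simp only [shiftMap, Sym2.map_mk, Sym2.mem_iff, mem_edgeSet, Sym2.eq_iff, ShiftMoves]
          at * <;>
        grind [G.adj_comm, G.irrefl]

theorem shiftGraph_eq_self (h : ∀ v, ¬G.ShiftMoves x y v) : shiftGraph G x y = G := by
  ext u v
  simp [shiftGraph_adj, h]

def shiftGraphSwapIso : shiftGraph G x y ≃g shiftGraph G y x where
  toEquiv := Equiv.swap x y
  map_rel_iff' {u v} := by
    simp only [shiftGraph_adj, ShiftMoves, Equiv.swap_apply_def]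
    split_ifs <;> grind [G.adj_comm, G.irrefl]

theorem adjMatrix_shiftGraph [DecidableRel G.Adj] [DecidableRel (shiftGraph G x y).Adj] :
    (shiftGraph G x y).adjMatrix ℝ = G.adjMatrix ℝ +
      vecMulVec (Pi.single x 1 - Pi.single y 1) ({v | G.ShiftMoves x y v}.indicator 1) +
      vecMulVec ({v | G.ShiftMoves x y v}.indicator 1) (Pi.single x 1 - Pi.single y 1) := by
  ext u v
  classical
  simp only [Matrix.add_apply, vecMulVec_apply, adjMatrix_apply, Set.indicator_apply,
    Pi.single_apply, Pi.sub_apply, Set.mem_ofPred_eq, Pi.one_apply]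
  by_cases h : (shiftGraph G x y).Adj u v
  all_goals
    simp only [h, if_true, if_false]
    rw [shiftGraph_adj] at h
    unfold ShiftMoves at *
    split_ifs <;> grind [G.adj_comm, G.irrefl]

end Shift

theorem specRad_lt_specRad_shiftGraph {V : Type*} [Fintype V] [DecidableEq V]
    {G : SimpleGraph V} [DecidableRel G.Adj] {x y : V} {f : V → ℝ}
    (hf : ∀ i, 0 < f i) (hGf : G.adjMatrix ℝ *ᵥ f = specRad G • f)
    (hM : ∃ v, G.ShiftMoves x y v) (hfxy : f y ≤ f x) :
    specRad G < specRad (shiftGraph G x y) := by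
  classical
  obtain ⟨w, hw⟩ := hM
  have hxy : x ≠ y := by rintro rfl; exact hw.2.2 hw.2.1
  set a : V → ℝ := Pi.single x 1 - Pi.single y 1
  set b : V → ℝ := {v | G.ShiftMoves x y v}.indicator 1
  set A' := (shiftGraph G x y).adjMatrix ℝ
  have hA' : A'.IsHermitian := (shiftGraph G x y).isHermitian_adjMatrix ℝ
  have hρ' : ∀ μ ∈ spectrum ℝ A', μ ≤ specRad (shiftGraph G x y) :=
    fun μ => le_specRad_of_mem_spectrum
  have hbf : 0 < b ⬝ᵥ f := by
    refine Finset.sum_pos' (fun v _ => mul_nonneg ?_ (hf v).le) ⟨w, Finset.mem_univ w, ?_⟩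
    · exact Set.indicator_nonneg (fun _ _ => zero_le_one) v
    · simpa [b, Set.indicator_of_mem (show w ∈ {v | G.ShiftMoves x y v} from hw)] using hf w
  have haf : a ⬝ᵥ f = f x - f y := by simp [a, sub_dotProduct]
  have hA'f : A' *ᵥ f = specRad G • f + (b ⬝ᵥ f) • a + (a ⬝ᵥ f) • b := by
    simp only [A', adjMatrix_shiftGraph, add_mulVec, hGf, vecMulVec_mulVec, op_smul_eq_smul]
    rfl
  have hgain : specRad G * (f ⬝ᵥ f) ≤ f ⬝ᵥ A' *ᵥ f := by
    have hq : f ⬝ᵥ A' *ᵥ f = specRad G * (f ⬝ᵥ f) + 2 * (f x - f y) * (b ⬝ᵥ f) := by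
      simp only [hA'f, dotProduct_add, dotProduct_smul, smul_eq_mul, dotProduct_comm f a,
        dotProduct_comm f b, haf]
      ring
    rw [hq]
    exact le_add_of_nonneg_right (mul_nonneg (mul_nonneg zero_le_two (sub_nonneg.2 hfxy)) hbf.le)
  have hff : 0 < f ⬝ᵥ f :=
    Finset.sum_pos (fun i _ => mul_self_pos.2 (hf i).ne') ⟨x, Finset.mem_univ x⟩
  have hle := hA'.dotProduct_mulVec_le_of_spectrum_le hρ' f
  refine lt_of_le_of_ne (le_of_mul_le_mul_right (hgain.trans hle) hff) fun heq => ?_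
  rw [← heq] at hle hρ'
  have hA'f' := hA'.mulVec_eq_smul_of_dotProduct_mulVec_eq hρ' (le_antisymm hle hgain)
  have hay : a y = -1 := by simp [a, hxy.symm]
  have hby : b y = 0 := Set.indicator_of_notMem (fun h => G.irrefl h.2.1) _
  have hy := congrFun (hA'f'.symm.trans hA'f) y
  simp only [Pi.add_apply, Pi.smul_apply, smul_eq_mul, hay, hby] at hy
  linarith

end SimpleGraph

/-- for connected `G`, ρ(S_{xy}(G)) > ρ(G) unless S_{xy}(G) ≅ G. -/
theorem stmt7 (n : ℕ) (G : SimpleGraph (Fin n)) (hconn : G.Connected) (x y : Fin n) :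
    Nonempty (shiftGraph G x y ≃g G) ∨ specRad G < specRad (shiftGraph G x y) := by
  classical
  by_cases hM : ∃ v, G.ShiftMoves x y v
  · by_cases hM' : ∃ v, G.ShiftMoves y x v
    · right
      obtain ⟨f, hf, hGf⟩ := hconn.exists_pos_eigenvector
      rcases le_total (f y) (f x) with hfxy | hfyx
      · exact specRad_lt_specRad_shiftGraph hf hGf hM hfxy
      · rw [specRad_congr (shiftGraphSwapIso G x y)]
        exact specRad_lt_specRad_shiftGraph hf hGf hM' hfyx
    · left
      have e := shiftGraphSwapIso G x y
      rw [shiftGraph_eq_self G y x (not_exists.mp hM')] at e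
      exact ⟨e⟩
  · left
    rw [shiftGraph_eq_self G x y (not_exists.mp hM)]
    exact ⟨Iso.refl⟩
end

section
/- Let k ≥ 2 and n ≥ 2k be integers, and let 𝒢 = {G₁, …, G_{kn}} be a family of balanced bipartite graphs on vertex set [2n] with common bipartition (X, Y). If every Gᵢ is isomorphic to B_{n,k} and there exist t₁, t₂ with G_{t₁} ≠ G_{t₂}, then 𝒢 admits a rainbow k-factor. -/
/-!
Counting the edges of `K_{n,n}` missing from `Gᵢ ≅ B_{n,k}` shows that they all lie at one
vertex `wᵢ`, of degree `k - 1` in `Gᵢ`. For a set `S` of colours, the edges missed by all of `S`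
therefore form a star centred at the common `wᵢ`. Let `v₀` be the most frequent centre. Since
the family is not constant, some `k` colours have neighbourhoods of `v₀` covering `k` vertices,
and Hall's theorem turns them into a rainbow star of size `k` at `v₀`; a bipartite circulant
extends it to a `k`-regular `H ⊆ K_{n,n}`. Hall's condition for assigning the `kn` colours to the
`kn` edges of `H` then holds: stars at `v₀` are rainbow, and a star at any other vertex `v` is
missed only by the colours centred at `v`, which are at most half of all colours.
-/

open SimpleGraph

open Finset

open scoped Classical

theorem Finset.card_filter_of_bijOn {α β : Type*} [Fintype β] {f : α → β} {s : Finset α}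
    (hf : Set.BijOn f s Set.univ) (P : β → Prop) [DecidablePred P] :
    #{x ∈ s | P (f x)} = #{y | P y} := by
  refine card_nbij f (fun x hx => ?_) (hf.injOn.mono (filter_subset _ s)) fun y hy => ?_
  · simpa using (mem_filter.mp hx).2
  · obtain ⟨x, hx, rfl⟩ := hf.surjOn (Set.mem_univ y)
    exact ⟨x, mem_filter.mpr ⟨hx, by simpa using hy⟩, rfl⟩

theorem Fin.card_filter_add_val_lt {n : ℕ} [NeZero n] {k : ℕ} (hk : k ≤ n) (a : Fin n) :
    #{z : Fin n | ((a + z : Fin n) : ℕ) < k} = k := by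
  rw [card_filter_of_bijOn (s := univ) (f := fun z => a + z)
    (by simpa using (Equiv.addLeft a).bijective.bijOn_univ) (fun z : Fin n => (z : ℕ) < k)]
  simpa using (Fin.card_filter_val_lt (n := n) (m := k)).trans (min_eq_right hk)

theorem Equiv.Perm.exists_mem_iff_mem {α : Type*} [Fintype α] {A B : Finset α} (h : #A = #B) :
    ∃ σ : Equiv.Perm α, ∀ x, x ∈ A ↔ σ x ∈ B :=
  ⟨(equivOfCardEq h).extendSubtype, fun x =>
    ⟨Equiv.extendSubtype_mem _ x, not_imp_not.mp (Equiv.extendSubtype_not_mem _ x)⟩⟩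

theorem Finset.exists_injective_mem_of_card_pred_le {κ α : Type*} [Fintype κ]
    (N : κ → Finset α) (hN : ∀ j, Fintype.card κ - 1 ≤ #(N j))
    (hU : Fintype.card κ ≤ #(univ.biUnion N)) :
    ∃ f : κ → α, Function.Injective f ∧ ∀ j, f j ∈ N j := by
  refine (all_card_le_biUnion_card_iff_exists_injective N).mp fun s => ?_
  rcases eq_or_ne s univ with rfl | hs
  · simpa using hU
  rcases s.eq_empty_or_nonempty with rfl | ⟨j, hj⟩
  · simp
  have := (card_lt_iff_ne_univ s).mpr hs
  calc #s ≤ Fintype.card κ - 1 := by omega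
    _ ≤ #(N j) := hN j
    _ ≤ #(s.biUnion N) := card_le_card (subset_biUnion_of_mem N hj)

theorem Finset.lt_card_union_of_ne {α : Type*} {A B : Finset α} (hAB : #A = #B) (hne : A ≠ B) :
    #A < #(A ∪ B) := by
  by_contra! h
  have hA := eq_of_subset_of_card_le subset_union_left h
  have hB := eq_of_subset_of_card_le subset_union_right (hAB ▸ h)
  exact hne (hA.trans hB.symm)

namespace SimpleGraph

variable {V ι : Type*}

theorem ncard_neighborSet (G : SimpleGraph V) (v : V)
    [Fintype (G.neighborSet v)] : (G.neighborSet v).ncard = G.degree v := by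
  rw [← coe_neighborFinset, Set.ncard_coe_finset, card_neighborFinset_eq_degree]

theorem IsRegularOfDegree.two_mul_card_edgeFinset [Fintype V] {G : SimpleGraph V} {d : ℕ}
    (hG : G.IsRegularOfDegree d) :
    2 * #G.edgeFinset = Fintype.card V * d := by
  rw [← sum_degrees_eq_twice_card_edges, sum_congr rfl fun v _ => hG.degree_eq v, sum_const,
    card_univ, smul_eq_mul]

def ContainsAwayFrom (G K : SimpleGraph V) (w : V) : Prop :=
  ∀ e ∈ K.edgeSet, w ∉ e → e ∈ G.edgeSet

section ContainsAwayFrom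

variable {G G' K : SimpleGraph V} {w : V}

theorem ContainsAwayFrom.adj (h : G.ContainsAwayFrom K w) {u v : V} (huv : K.Adj u v)
    (hu : u ≠ w) (hv : v ≠ w) : G.Adj u v :=
  h s(u, v) huv (by simp [Sym2.mem_iff, hu.symm, hv.symm])

theorem ContainsAwayFrom.eq_of_two_le_card (h : G.ContainsAwayFrom K w) {v : V}
    {U : Finset (Sym2 V)} (hU : ∀ e ∈ U, e ∈ K.edgeSet ∧ v ∈ e) (hU2 : 2 ≤ #U)
    (hG : ∀ e ∈ U, e ∉ G.edgeSet) : w = v := by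
  obtain ⟨e₁, he₁, e₂, he₂, hne⟩ := one_lt_card.mp hU2
  have hw : ∀ e ∈ U, w ∈ e := fun e he => by_contra fun hwe => hG e he (h e (hU e he).1 hwe)
  by_contra hwv
  exact hne (Sym2.eq_of_ne_mem hwv (hw e₁ he₁) (hU e₁ he₁).2 (hw e₂ he₂) (hU e₂ he₂).2)

variable [Fintype V]

/-- The missing edges of `K` at `w` are among all missing edges, so they are all of them
exactly when the two counts agree. -/
theorem containsAwayFrom_iff_card (hGK : G ≤ K) (w : V) :
    G.ContainsAwayFrom K w ↔
      #K.edgeFinset - #G.edgeFinset = K.degree w - G.degree w := by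
  have hinc : G.incidenceFinset w ⊆ K.incidenceFinset w := fun e he => by
    simp only [mem_incidenceFinset] at he ⊢
    exact ⟨edgeSet_mono hGK he.1, he.2⟩
  have hsub : K.incidenceFinset w \ G.incidenceFinset w ⊆ K.edgeFinset \ G.edgeFinset := by
    intro e he
    simp only [mem_sdiff, mem_incidenceFinset, mem_edgeFinset] at he ⊢
    exact ⟨he.1.1, fun hG => he.2 ⟨hG, he.1.2⟩⟩
  rw [← card_sdiff_of_subset (edgeFinset_mono hGK), ← card_incidenceFinset_eq_degree,
    ← card_incidenceFinset_eq_degree, ← card_sdiff_of_subset hinc]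
  constructor
  · intro h
    refine congrArg card (subset_antisymm (fun e he => ?_) hsub)
    simp only [mem_sdiff, mem_incidenceFinset, mem_edgeFinset] at he ⊢
    by_contra hw
    exact he.2 (h e he.1 fun hwe => hw ⟨⟨he.1, hwe⟩, fun hG => he.2 hG.1⟩)
  · intro h e he hwe
    by_contra hG
    have hM := eq_of_subset_of_card_le hsub h.le
    have : e ∈ K.incidenceFinset w \ G.incidenceFinset w := by
      rw [hM]; simpa [mem_sdiff] using ⟨he, hG⟩
    exact hwe ((mem_incidenceFinset _ _ _).mp (mem_sdiff.mp this).1).2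

theorem ContainsAwayFrom.of_iso {B : SimpleGraph V} {d : ℕ} (hK : K.IsRegularOfDegree d)
    (hGK : G ≤ K) (hBK : B ≤ K) {y : V} (hB : B.ContainsAwayFrom K y) (f : G ≃g B) :
    G.ContainsAwayFrom K (f.symm y) := by
  rw [containsAwayFrom_iff_card hBK] at hB
  rw [containsAwayFrom_iff_card hGK, f.card_edgeFinset_eq, hK.degree_eq, ← f.degree_eq,
    f.apply_symm_apply, hB, hK.degree_eq]

theorem ContainsAwayFrom.degree_sub_one_le (h : G.ContainsAwayFrom K w) {v : V} (hv : v ≠ w) :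
    K.degree v - 1 ≤ G.degree v := by
  rw [← card_neighborFinset_eq_degree, ← card_neighborFinset_eq_degree]
  refine (pred_card_le_card_erase (a := w)).trans (card_le_card fun x hx => ?_)
  rw [mem_erase, mem_neighborFinset] at hx
  exact (mem_neighborFinset _ _ _).mpr (h.adj hx.2 hv hx.1)

theorem ContainsAwayFrom.eq (hGK : G ≤ K) (hG'K : G' ≤ K) (hG : G.ContainsAwayFrom K w)
    (hG' : G'.ContainsAwayFrom K w) (hw : G.neighborFinset w = G'.neighborFinset w) :
    G = G' := by
  have hw' : ∀ x, G.Adj w x ↔ G'.Adj w x := fun x => by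
    rw [← mem_neighborFinset, hw, mem_neighborFinset]
  ext u v
  by_cases hu : u = w
  · subst hu; exact hw' v
  by_cases hv : v = w
  · subst hv; rw [G.adj_comm, G'.adj_comm]; exact hw' u
  exact ⟨fun h => hG'.adj (hGK h) hu hv, fun h => hG.adj (hG'K h) hu hv⟩

end ContainsAwayFrom

section Rainbow

variable [Fintype V] [Fintype ι] {F : ι → SimpleGraph V} {H K : SimpleGraph V}

theorem exists_equiv_of_card_add_card_le (hcard : #H.edgeFinset = Fintype.card ι)
    (hall : ∀ S : Finset ι,
      #S + #{e ∈ H.edgeFinset | ∀ i ∈ S, e ∉ (F i).edgeSet} ≤ Fintype.card ι) :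
    ∃ φ : H.edgeSet ≃ ι, ∀ e, (e : Sym2 V) ∈ (F (φ e)).edgeSet := by
  set t : ι → Finset (Sym2 V) := fun i => {e ∈ H.edgeFinset | e ∈ (F i).edgeSet}
  have hunion : ∀ S : Finset ι, S.biUnion t =
      H.edgeFinset \ {e ∈ H.edgeFinset | ∀ i ∈ S, e ∉ (F i).edgeSet} := by
    intro S
    ext e
    simp only [t, mem_biUnion, mem_filter, mem_sdiff]
    grind
  obtain ⟨f, hf, hft⟩ := (all_card_le_biUnion_card_iff_exists_injective t).mp fun S => by
    have := hall S
    rw [hunion, card_sdiff_of_subset (filter_subset _ _)]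
    omega
  let g : ι → H.edgeSet := fun i => ⟨f i, mem_edgeFinset.mp (mem_filter.mp (hft i)).1⟩
  have hg : Function.Bijective g := (Fintype.bijective_iff_injective_and_card g).mpr
    ⟨fun i j h => hf (congrArg Subtype.val h), by rw [← hcard, edgeFinset_card]⟩
  refine ⟨(Equiv.ofBijective g hg).symm, fun e => ?_⟩
  have hfe : f ((Equiv.ofBijective g hg).symm e) = e :=
    congrArg Subtype.val ((Equiv.ofBijective g hg).apply_symm_apply e)
  simpa [hfe] using (mem_filter.mp (hft ((Equiv.ofBijective g hg).symm e))).2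

/-- The edges missed by every colour of a nonempty `S` form a star, as each of them contains
`w i` for all `i ∈ S`. -/
theorem exists_equiv_of_containsAwayFrom {w : ι → V}
    (hF : ∀ i, (F i).ContainsAwayFrom K (w i)) (hHK : H ≤ K)
    (hcard : #H.edgeFinset = Fintype.card ι)
    (hcov : ∀ e ∈ H.edgeSet, ∃ i, e ∈ (F i).edgeSet)
    (hstar : ∀ (v : V) (U : Finset (Sym2 V)), (∀ e ∈ U, e ∈ H.edgeSet ∧ v ∈ e) → 2 ≤ #U →
      #{i | ∀ e ∈ U, e ∉ (F i).edgeSet} + #U ≤ Fintype.card ι) :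
    ∃ φ : H.edgeSet ≃ ι, ∀ e, (e : Sym2 V) ∈ (F (φ e)).edgeSet := by
  refine exists_equiv_of_card_add_card_le hcard fun S => ?_
  set U := {e ∈ H.edgeFinset | ∀ i ∈ S, e ∉ (F i).edgeSet}
  rcases S.eq_empty_or_nonempty with rfl | ⟨i₀, hi₀⟩
  · simpa [← hcard] using card_le_card (filter_subset _ H.edgeFinset)
  rcases U.eq_empty_or_nonempty with hU | ⟨e, he⟩
  · simpa [hU] using card_le_univ S
  rcases lt_or_ge #U 2 with hU1 | hU2
  · have heH : e ∈ H.edgeSet := mem_edgeFinset.mp (mem_filter.mp he).1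
    obtain ⟨i, hi⟩ := hcov e heH
    have hiS : i ∉ S := fun hiS => (mem_filter.mp he).2 i hiS hi
    have hS : #S ≤ Fintype.card ι - 1 := by
      simpa [card_erase_of_mem] using card_le_card fun j hj => mem_erase.mpr
        ⟨ne_of_mem_of_not_mem hj hiS, mem_univ j⟩
    have hi : 0 < Fintype.card ι := Fintype.card_pos_iff.mpr ⟨i⟩
    have := card_pos.mpr ⟨e, he⟩
    omega
  refine le_trans (Nat.add_le_add_right (card_le_card fun i hi => ?_) _)
    (hstar (w i₀) U (fun e he => ⟨mem_edgeFinset.mp (mem_filter.mp he).1, ?_⟩) hU2)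
  · exact mem_filter.mpr ⟨mem_univ i, fun e he => (mem_filter.mp he).2 i hi⟩
  · by_contra hwe
    exact (mem_filter.mp he).2 i₀ hi₀
      (hF i₀ e (edgeSet_mono hHK (mem_edgeFinset.mp (mem_filter.mp he).1)) hwe)

theorem card_filter_add_card_le_of_injective {κ : Type*} [Fintype κ] {idx : κ → ι}
    (hidx : Function.Injective idx) {edge : κ → Sym2 V}
    (hedge : ∀ j, edge j ∈ (F (idx j)).edgeSet) {U : Finset (Sym2 V)}
    (hU : U ⊆ univ.image edge) :
    #{i | ∀ e ∈ U, e ∉ (F i).edgeSet} + #U ≤ Fintype.card ι := by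
  set J : Finset κ := {j | edge j ∈ U}
  have hUJ : #U ≤ #J := by
    refine (card_le_card fun e he => ?_).trans (card_image_le (f := edge))
    obtain ⟨j, -, rfl⟩ := mem_image.mp (hU he)
    exact mem_image_of_mem _ (by simpa [J] using he)
  have hdisj : Disjoint ({i | ∀ e ∈ U, e ∉ (F i).edgeSet} : Finset ι) (J.image idx) := by
    refine disjoint_right.mpr fun i hi hiF => ?_
    obtain ⟨j, hj, rfl⟩ := mem_image.mp hi
    exact (mem_filter.mp hiF).2 _ (mem_filter.mp hj).2 (hedge j)
  have := card_le_univ (({i | ∀ e ∈ U, e ∉ (F i).edgeSet} : Finset ι) ∪ J.image idx)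
  rw [card_union_of_disjoint hdisj, card_image_of_injective _ hidx] at this
  omega

/-- A star of at least two edges at `v ≠ v₀` is missed only by the colours with `w i = v`,
at most half of all colours by the maximality of `v₀`. -/
theorem exists_equiv_of_rainbow_star {w : ι → V} {k : ℕ}
    (hF : ∀ i, (F i).ContainsAwayFrom K (w i)) (hHK : H ≤ K) (hH : H.IsRegularOfDegree k)
    (hcard : #H.edgeFinset = Fintype.card ι) (h2k : 2 * k ≤ Fintype.card ι) {v₀ : V}
    (hmax : ∀ v, #{i | w i = v} ≤ #{i | w i = v₀}) {κ : Type*} [Fintype κ] {idx : κ → ι}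
    (hidx : Function.Injective idx) {t : κ → V} (hv₀ : ∀ x, H.Adj v₀ x ↔ x ∈ Set.range t)
    (hadj : ∀ j, (F (idx j)).Adj v₀ (t j)) :
    ∃ φ : H.edgeSet ≃ ι, ∀ e, (e : Sym2 V) ∈ (F (φ e)).edgeSet := by
  refine exists_equiv_of_containsAwayFrom hF hHK hcard (fun e he => ?_) fun v U hU hU2 => ?_
  · by_cases hv : v₀ ∈ e
    · obtain ⟨x, rfl⟩ := Sym2.mem_iff_exists.mp hv
      obtain ⟨j, rfl⟩ := (hv₀ x).mp he
      exact ⟨idx j, hadj j⟩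
    obtain ⟨i⟩ : Nonempty ι := by
      rw [← Fintype.card_pos_iff, ← hcard]
      exact card_pos.mpr ⟨e, mem_edgeFinset.mpr he⟩
    obtain ⟨i₀, hi₀⟩ := card_pos.mp ((card_pos.mpr ⟨i, by simp⟩).trans_le (hmax (w i)))
    exact ⟨i₀, hF i₀ e (edgeSet_mono hHK he) ((mem_filter.mp hi₀).2 ▸ hv)⟩
  by_cases hv : v = v₀
  · subst hv
    refine card_filter_add_card_le_of_injective hidx (edge := fun j => s(v, t j)) hadj
      fun e he => ?_
    obtain ⟨heH, hve⟩ := hU e he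
    obtain ⟨x, rfl⟩ := Sym2.mem_iff_exists.mp hve
    obtain ⟨j, rfl⟩ := (hv₀ x).mp heH
    exact mem_image_of_mem _ (mem_univ j)
  have hsub : ({i | ∀ e ∈ U, e ∉ (F i).edgeSet} : Finset ι) ⊆ ({i | w i = v} : Finset ι) :=
    fun i hi => mem_filter.mpr ⟨mem_univ i, (hF i).eq_of_two_le_card
      (fun e he => ⟨edgeSet_mono hHK (hU e he).1, (hU e he).2⟩) hU2 (mem_filter.mp hi).2⟩
  have hUk : #U ≤ k := by
    rw [← hH.degree_eq v, ← card_incidenceFinset_eq_degree]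
    exact card_le_card fun e he => (mem_incidenceFinset _ _ _).mpr (hU e he)
  have hdisj : #{i | w i = v} + #{i | w i = v₀} ≤ Fintype.card ι := by
    rw [← card_union_of_disjoint (disjoint_filter.mpr fun i _ h h' => hv (h.symm.trans h'))]
    exact card_le_univ _
  have := card_le_card hsub
  have := hmax v
  omega

/-- A colour with `w i ≠ v` alone sees `d - 1 ≥ k` neighbours of `v`; if every `w i` equals `v`,
two different graphs of the family differ exactly in their neighbourhoods of `v`, which are
two distinct `(k - 1)`-sets. -/
theorem exists_card_le_le_card_biUnion {d k : ℕ} {w : ι → V} (hK : K.IsRegularOfDegree d)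
    (hkd : k < d) (hk : 0 < k) (hFK : ∀ i, F i ≤ K) (hF : ∀ i, (F i).ContainsAwayFrom K (w i))
    (hdeg : ∀ i, (F i).degree (w i) = k - 1) (hne : ∃ i j, F i ≠ F j) (v : V) :
    ∃ S : Finset ι, #S ≤ k ∧ k ≤ #(S.biUnion fun i => (F i).neighborFinset v) := by
  by_cases hw : ∃ i, w i ≠ v
  · obtain ⟨i, hi⟩ := hw
    have := (hF i).degree_sub_one_le hi.symm
    rw [hK.degree_eq] at this
    refine ⟨{i}, by rwa [card_singleton], ?_⟩
    rw [singleton_biUnion, card_neighborFinset_eq_degree]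
    omega
  push Not at hw
  obtain ⟨p, q, hpq⟩ := hne
  have hNpq : (F p).neighborFinset v ≠ (F q).neighborFinset v := fun h =>
    hpq ((hw p ▸ hF p).eq (hFK p) (hFK q) (hw q ▸ hF q) h)
  have hcard : ∀ i, #((F i).neighborFinset v) = k - 1 := fun i => by
    rw [card_neighborFinset_eq_degree, ← hw i, hdeg]
  have hunion := lt_card_union_of_ne ((hcard p).trans (hcard q).symm) hNpq
  have hp := hcard p
  have hq := hcard q
  have hk2 : 2 ≤ k := by
    by_contra! hk1
    exact hNpq ((card_eq_zero.mp (by omega)).trans (card_eq_zero.mp (by omega)).symm)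
  refine ⟨{p, q}, (card_insert_le _ _).trans (by simpa using hk2), ?_⟩
  rw [biUnion_insert, singleton_biUnion]
  omega

/-- Every colour sees at least `k - 1` neighbours of `v`, so by Hall's theorem any `k` colours
whose neighbourhoods of `v` cover `k` vertices have distinct representatives. -/
theorem exists_rainbow_star {d k : ℕ} {w : ι → V} (hK : K.IsRegularOfDegree d) (hkd : k < d)
    (hk : 0 < k) (hFK : ∀ i, F i ≤ K) (hF : ∀ i, (F i).ContainsAwayFrom K (w i))
    (hdeg : ∀ i, (F i).degree (w i) = k - 1) (hne : ∃ i j, F i ≠ F j)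
    (hkι : k ≤ Fintype.card ι) (v : V) :
    ∃ C : Finset ι, #C = k ∧
      ∃ t : C → V, Function.Injective t ∧ ∀ c : C, (F c).Adj v (t c) := by
  set N := fun i => (F i).neighborFinset v
  have hN : ∀ i, k - 1 ≤ #(N i) := fun i => by
    simp only [N, card_neighborFinset_eq_degree]
    by_cases hi : w i = v
    · rw [← hi, hdeg]
    · have := (hF i).degree_sub_one_le (Ne.symm hi)
      rw [hK.degree_eq] at this
      omega
  obtain ⟨S, hSk, hSN⟩ := exists_card_le_le_card_biUnion hK hkd hk hFK hF hdeg hne v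
  obtain ⟨C, hSC, -, hC⟩ := exists_subsuperset_card_eq (subset_univ S) hSk (by simpa using hkι)
  have hCN : Fintype.card C ≤ #(univ.biUnion fun c : C => N c) := by
    refine (by simpa [hC] using hSN : Fintype.card C ≤ #(S.biUnion N)).trans
      (card_le_card fun x hx => ?_)
    obtain ⟨i, hi, hx⟩ := mem_biUnion.mp hx
    exact mem_biUnion.mpr ⟨⟨i, hSC hi⟩, mem_univ _, hx⟩
  obtain ⟨t, ht, htN⟩ := exists_injective_mem_of_card_pred_le (fun c : C => N c)
    (fun c => by rw [Fintype.card_coe, hC]; exact hN c) hCN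
  exact ⟨C, hC, t, ht, fun c => (mem_neighborFinset _ _ _).mp (htN c)⟩

theorem exists_isRegularOfDegree_rainbow {d k : ℕ} {w : ι → V} (hK : K.IsRegularOfDegree d)
    (hkd : k < d) (hk : 0 < k) (hV : Fintype.card V * k = 2 * Fintype.card ι)
    (h2k : 2 * k ≤ Fintype.card ι) (hFK : ∀ i, F i ≤ K)
    (hF : ∀ i, (F i).ContainsAwayFrom K (w i)) (hdeg : ∀ i, (F i).degree (w i) = k - 1)
    (hne : ∃ i j, F i ≠ F j)
    (hreal : ∀ v (T : Finset V), (∀ x ∈ T, K.Adj v x) → #T = k →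
      ∃ H ≤ K, H.IsRegularOfDegree k ∧ ∀ x, H.Adj v x ↔ x ∈ T) :
    ∃ H : SimpleGraph V, H.IsRegularOfDegree k ∧
      ∃ φ : H.edgeSet ≃ ι, ∀ e, (e : Sym2 V) ∈ (F (φ e)).edgeSet := by
  obtain ⟨v₀, -, hmax⟩ :=
    exists_max_image univ (fun v => #{i | w i = v}) ⟨w hne.choose, mem_univ _⟩
  obtain ⟨C, hC, t, ht, hadj⟩ := exists_rainbow_star hK hkd hk hFK hF hdeg hne (by omega) v₀
  obtain ⟨H, hHK, hH, hv₀⟩ := hreal v₀ (univ.image t)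
    (fun x hx => by obtain ⟨j, -, rfl⟩ := mem_image.mp hx; exact hFK _ (hadj j))
    (by rw [card_image_of_injective _ ht, card_univ, Fintype.card_coe, hC])
  have hcard := hH.two_mul_card_edgeFinset
  refine ⟨H, hH, exists_equiv_of_rainbow_star hF hHK hH (by linarith) h2k
    (fun v => hmax v (mem_univ v)) Subtype.val_injective (fun x => by simp [hv₀]) hadj⟩

end Rainbow

end SimpleGraph

def completeBipartiteFin (n : ℕ) : SimpleGraph (Fin (2 * n)) where
  Adj u v := (u.val < n ∧ n ≤ v.val) ∨ (v.val < n ∧ n ≤ u.val)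
  symm := ⟨fun _ _ h => h.symm⟩
  loopless := ⟨fun _ h => by omega⟩

namespace completeBipartiteFin

variable {n : ℕ}

theorem adj_iff {u v : Fin (2 * n)} :
    (completeBipartiteFin n).Adj u v ↔ (u.val < n ↔ n ≤ v.val) := by
  simp only [completeBipartiteFin]
  omega

theorem val_lt_iff_of_adj {w u v : Fin (2 * n)} (hu : (completeBipartiteFin n).Adj w u)
    (hv : (completeBipartiteFin n).Adj w v) : u.val < n ↔ v.val < n := by
  rw [adj_iff] at hu hv
  omega

theorem eq_of_modNat_eq {u v : Fin (2 * n)} (h : u.modNat = v.modNat)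
    (hs : u.val < n ↔ v.val < n) : u = v := by
  have huv := congrArg Fin.val h
  simp only [Fin.coe_modNat] at huv
  have := u.isLt
  have := v.isLt
  apply Fin.ext
  by_cases hu : u.val < n
  · rwa [Nat.mod_eq_of_lt hu, Nat.mod_eq_of_lt (hs.mp hu)] at huv
  · have hv : n ≤ v.val := not_lt.mp (hs.not.mp hu)
    rw [Nat.mod_eq_sub_mod (not_lt.mp hu), Nat.mod_eq_of_lt (by omega),
      Nat.mod_eq_sub_mod hv, Nat.mod_eq_of_lt (by omega)] at huv
    omega

theorem bijOn_modNat (u : Fin (2 * n)) :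
    Set.BijOn Fin.modNat ((completeBipartiteFin n).neighborSet u) Set.univ := by
  refine ⟨Set.mapsTo_univ _ _, fun a ha b hb hab => eq_of_modNat_eq hab (val_lt_iff_of_adj ha hb),
    fun z _ => ?_⟩
  have := z.isLt
  by_cases hu : u.val < n
  · refine ⟨⟨n + z, by omega⟩, by rw [mem_neighborSet, adj_iff]; simp [hu], Fin.ext ?_⟩
    simp [Fin.coe_modNat, Nat.mod_eq_of_lt this]
  · refine ⟨⟨z, by omega⟩, by rw [mem_neighborSet, adj_iff]; simp; omega, Fin.ext ?_⟩
    simp [Fin.coe_modNat, Nat.mod_eq_of_lt this]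

theorem isRegularOfDegree : (completeBipartiteFin n).IsRegularOfDegree n := fun u => by
  have := card_filter_of_bijOn (s := (completeBipartiteFin n).neighborFinset u)
    (by rw [coe_neighborFinset]; exact bijOn_modNat u) fun _ : Fin n => True
  simp only [filter_true_of_mem (fun _ _ => trivial), card_univ, Fintype.card_fin] at this
  rw [← card_neighborFinset_eq_degree]
  convert this

end completeBipartiteFin

def bipCirculant (n k : ℕ) (c : Fin (2 * n) → Fin n) : SimpleGraph (Fin (2 * n)) where
  Adj u v := (completeBipartiteFin n).Adj u v ∧ ((c u + c v : Fin n) : ℕ) < k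
  symm := ⟨fun u v h => ⟨h.1.symm, by rw [add_comm]; exact h.2⟩⟩
  loopless := ⟨fun u h => (completeBipartiteFin n).loopless.irrefl u h.1⟩

namespace bipCirculant

open completeBipartiteFin

variable {n k : ℕ} {c : Fin (2 * n) → Fin n}

theorem le_completeBipartiteFin : bipCirculant n k c ≤ completeBipartiteFin n :=
  fun _ _ h => h.1

theorem isRegularOfDegree [NeZero n] (hk : k ≤ n)
    (hc : ∀ u, Set.BijOn c ((completeBipartiteFin n).neighborSet u) Set.univ) :
    (bipCirculant n k c).IsRegularOfDegree k := fun u => by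
  have hN : (bipCirculant n k c).neighborFinset u =
      {v ∈ (completeBipartiteFin n).neighborFinset u | ((c u + c v : Fin n) : ℕ) < k} := by
    ext v
    rw [mem_neighborFinset, mem_filter, mem_neighborFinset]
    rfl
  rw [← card_neighborFinset_eq_degree, hN, card_filter_of_bijOn (by simpa using hc u)
    (fun z => ((c u + z : Fin n) : ℕ) < k), Fin.card_filter_add_val_lt hk]

/-- Label the side of `v₀` by `Fin.modNat`, and the other side by `σ ∘ Fin.modNat` where the
permutation `σ` moves the labels of `T` onto the labels `z` with `c v₀ + z < k`. -/
theorem exists_adj_iff [NeZero n] (hk : k ≤ n) (v₀ : Fin (2 * n)) {T : Finset (Fin (2 * n))}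
    (hT : ∀ x ∈ T, (completeBipartiteFin n).Adj v₀ x) (hTk : #T = k) :
    ∃ c : Fin (2 * n) → Fin n,
      (∀ u, Set.BijOn c ((completeBipartiteFin n).neighborSet u) Set.univ) ∧
        ∀ x, (bipCirculant n k c).Adj v₀ x ↔ x ∈ T := by
  have hTc : #(T.image Fin.modNat) = k := by
    rw [card_image_of_injOn fun x hx y hy h =>
      eq_of_modNat_eq h (val_lt_iff_of_adj (hT x hx) (hT y hy)), hTk]
  obtain ⟨σ, hσ⟩ := Equiv.Perm.exists_mem_iff_mem (B := {z | ((v₀.modNat + z : Fin n) : ℕ) < k})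
    (hTc.trans (Fin.card_filter_add_val_lt hk _).symm)
  set c : Fin (2 * n) → Fin n :=
    fun v => if (completeBipartiteFin n).Adj v₀ v then σ v.modNat else v.modNat
  refine ⟨c, fun u => ?_, fun x => ?_⟩
  · have hu : ∀ v ∈ (completeBipartiteFin n).neighborSet u,
        ((completeBipartiteFin n).Adj v₀ v ↔ ¬ (completeBipartiteFin n).Adj v₀ u) :=
      fun v hv => by
        rw [mem_neighborSet, adj_iff] at hv
        simp only [adj_iff]
        omega
    by_cases hv₀u : (completeBipartiteFin n).Adj v₀ u
    · exact (bijOn_modNat u).congr fun v hv => by simp [c, hu v hv, hv₀u]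
    · exact (σ.bijective.bijOn_univ.comp (bijOn_modNat u)).congr
        fun v hv => by simp [c, hu v hv, hv₀u]
  · have hcv₀ : c v₀ = v₀.modNat := by simp [c]
    simp only [bipCirculant, hcv₀]
    constructor
    · rintro ⟨hx, hlt⟩
      obtain ⟨y, hy, hyx⟩ := mem_image.mp ((hσ x.modNat).mpr (by simpa [c, hx] using hlt))
      rwa [← eq_of_modNat_eq hyx (val_lt_iff_of_adj (hT y hy) hx)]
    · intro hx
      exact ⟨hT x hx, by simpa [c, hT x hx] using (hσ x.modNat).mp (mem_image_of_mem _ hx)⟩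

theorem exists_isRegularOfDegree_adj_iff [NeZero n] (hk : k ≤ n)
    (v₀ : Fin (2 * n)) {T : Finset (Fin (2 * n))}
    (hT : ∀ x ∈ T, (completeBipartiteFin n).Adj v₀ x) (hTk : #T = k) :
    ∃ H ≤ completeBipartiteFin n, H.IsRegularOfDegree k ∧ ∀ x, H.Adj v₀ x ↔ x ∈ T := by
  obtain ⟨c, hc, hv₀⟩ := exists_adj_iff hk v₀ hT hTk
  exact ⟨_, le_completeBipartiteFin, isRegularOfDegree hk hc, hv₀⟩

end bipCirculant

theorem bipG_le_completeBipartiteFin (n a b : ℕ) : bipG n a b ≤ completeBipartiteFin n :=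
  fun _ _ h => h.imp (fun h => ⟨h.1, h.2.1⟩) fun h => ⟨h.1, h.2.1⟩

theorem bipG_containsAwayFrom {n : ℕ} (a : ℕ) {y : Fin (2 * n)} (hy : y.val = 2 * n - 1) :
    (bipG n a 1).ContainsAwayFrom (completeBipartiteFin n) y := by
  intro e he hye
  induction e with
  | _ u v =>
    have hu : u.val ≠ y.val := Fin.val_injective.ne fun h => hye (h ▸ Sym2.mem_mk_left u v)
    have hv : v.val ≠ y.val := Fin.val_injective.ne fun h => hye (h ▸ Sym2.mem_mk_right u v)
    have := u.isLt
    have := v.isLt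
    simp only [mem_edgeSet, completeBipartiteFin, bipG] at he ⊢
    omega

theorem bipG_degree {n : ℕ} {a : ℕ} (ha : a ≤ n) {y : Fin (2 * n)} (hy : y.val = 2 * n - 1) :
    (bipG n a 1).degree y = a := by
  have hN : (bipG n a 1).neighborFinset y = ({u | u.val < a} : Finset (Fin (2 * n))) := by
    ext u
    have := u.isLt
    rw [mem_neighborFinset, mem_filter]
    simp only [bipG, mem_univ, true_and]
    omega
  rw [← card_neighborFinset_eq_degree, hN, Fin.card_filter_val_lt]
  omega

/-- if every Gᵢ ≅ B_{n,k} but the family is not constant, then it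
admits a rainbow k-factor. -/
theorem stmt12 (n k : ℕ) (hk : 2 ≤ k) (hn : 2*k ≤ n)
    (𝒢 : Fin (k*n) → SimpleGraph (Fin (2*n)))
    (hbip : ∀ i u v, (𝒢 i).Adj u v → (u.val < n ∧ n ≤ v.val) ∨ (v.val < n ∧ n ≤ u.val))
    (hiso : ∀ i, Nonempty (𝒢 i ≃g bipG n (k-1) 1))
    (hne : ∃ t₁ t₂, 𝒢 t₁ ≠ 𝒢 t₂) :
    ∃ H, IsRainbowFactor 𝒢 k H := by
  have : NeZero n := ⟨by omega⟩
  have hK : (completeBipartiteFin n).IsRegularOfDegree n := completeBipartiteFin.isRegularOfDegree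
  have hGK : ∀ i, 𝒢 i ≤ completeBipartiteFin n := hbip
  have f := fun i => (hiso i).some
  set y : Fin (2 * n) := ⟨2 * n - 1, by omega⟩
  have hw : ∀ i, (𝒢 i).ContainsAwayFrom (completeBipartiteFin n) ((f i).symm y) := fun i =>
    (bipG_containsAwayFrom (k - 1) rfl).of_iso hK (hGK i) (bipG_le_completeBipartiteFin ..) (f i)
  have hdeg : ∀ i, (𝒢 i).degree ((f i).symm y) = k - 1 := fun i => by
    rw [← (f i).degree_eq, (f i).apply_symm_apply, bipG_degree (by omega) rfl]
  obtain ⟨H, hH, φ, hφ⟩ := exists_isRegularOfDegree_rainbow hK (by omega) (by omega)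
    (by simp only [Fintype.card_fin]; ring) (by simp only [Fintype.card_fin]; nlinarith) hGK hw
    hdeg hne fun v T hT hTk => bipCirculant.exists_isRegularOfDegree_adj_iff (by omega) v hT hTk
  exact ⟨H, fun v => by rw [ncard_neighborSet, hH.degree_eq], φ, hφ⟩
end

section
/- Let 𝒢 = {G₁, …, G_n} be a family of balanced bipartite graphs on vertex set [2n] with common bipartition (X, Y), each part of size n. If ρ(Gᵢ) ≥ √(n(n−1)) for all i ∈ [n], then 𝒢 contains a rainbow perfect matching unless G₁ = G₂ = ⋯ = G_n ≅ K_{n-1,n} ∪ K₁. -/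
/-!
View each `Gᵢ` as an `n × n` grid whose cell `(k, l)` is the pair `x_k y_l`, and let `Dᵢ` be the
set of cells that are *not* edges of `Gᵢ`. For a bipartite graph, `ρ²` is at most the number of
edges (a singular value of the biadjacency matrix is at most its Frobenius norm), so
`ρ(Gᵢ)² ≥ n(n-1)` gives `|Dᵢ| ≤ n`.

A pair of permutations `(σ, τ)` describes the perfect matching `x_k y_{σ k}` whose edge at row
`k` gets colour `τ k`; it is rainbow iff no row is *missed*, i.e. `(k, σ k) ∉ D_{τ k}` for all `k`.
Precomposing `σ` and `τ` with all `n²` pairs of cyclic shifts meets every (row, column, colour)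
triple exactly once, so the number of missed rows averages `∑ |Dᵢ| / n² ≤ 1` over these pairs.
Hence some pair misses nothing, unless `|Dᵢ| = n` for all `i` and any two missing cells of
different colours share a row or a column (otherwise choose `(σ, τ)` missing both, which has two
missed rows). In that extremal case, for `n ≥ 3` the cross-intersection forces all `Dᵢ` to be one
and the same full row or column, i.e. `Gᵢ ≅ K_{n-1,n} ∪ K₁`. For `n = 2` this can fail only if
some `Dᵢ` is a diagonal of the `2 × 2` grid, but then `Gᵢ` is a perfect matching, of spectral
radius `1 < √2`.
-/

open SimpleGraph

open Finset Matrix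

section Frobenius

variable {ι κ : Type*} [Fintype ι] [Fintype κ]

theorem sum_mulVec_sq_le (M : Matrix ι κ ℝ) (q : κ → ℝ) :
    ∑ i, (M *ᵥ q) i ^ 2 ≤ (∑ i, ∑ j, M i j ^ 2) * ∑ j, q j ^ 2 := by
  rw [sum_mul]
  exact sum_le_sum fun i _ => sum_mul_sq_le_sq_mul_sq _ _ _

theorem sum_smul_sq (r : ℝ) (x : ι → ℝ) : ∑ i, (r • x) i ^ 2 = r ^ 2 * ∑ i, x i ^ 2 := by
  simp only [Pi.smul_apply, smul_eq_mul, mul_pow, mul_sum]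

theorem sum_sq_pos {x : ι → ℝ} (hx : x ≠ 0) : 0 < ∑ i, x i ^ 2 := by
  obtain ⟨i, hi⟩ := Function.ne_iff.mp hx
  exact (sq_pos_of_ne_zero hi).trans_le (single_le_sum (fun j _ => sq_nonneg (x j)) (mem_univ i))

theorem sq_le_sum_sq_of_mulVec_eq (M : Matrix ι κ ℝ) {μ : ℝ} {p : ι → ℝ} {q : κ → ℝ}
    (hq : M *ᵥ q = μ • p) (hp : Mᵀ *ᵥ p = μ • q) (hpq : p ≠ 0 ∨ q ≠ 0) :
    μ ^ 2 ≤ ∑ i, ∑ j, M i j ^ 2 := by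
  have h₁ := sum_mulVec_sq_le M q
  have h₂ := sum_mulVec_sq_le Mᵀ p
  rw [hq, sum_smul_sq] at h₁
  rw [hp, sum_smul_sq, sum_comm] at h₂
  simp only [transpose_apply] at h₂
  have hpos : 0 < ∑ i, p i ^ 2 + ∑ j, q j ^ 2 := by
    have : 0 ≤ ∑ i, p i ^ 2 := by positivity
    have : 0 ≤ ∑ j, q j ^ 2 := by positivity
    rcases hpq with h | h <;> linarith [sum_sq_pos h]
  nlinarith

end Frobenius

theorem SimpleGraph.Iso.adjMatrix_mulVec_apply {V W : Type*} [Fintype V] [Fintype W]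
    {G : SimpleGraph V} {G' : SimpleGraph W} [DecidableRel G.Adj] [DecidableRel G'.Adj]
    (f : G ≃g G') (v : W → ℝ) (x : V) :
    (G'.adjMatrix ℝ *ᵥ v) (f x) = (G.adjMatrix ℝ *ᵥ (v ∘ f)) x := by
  simp only [mulVec, dotProduct, adjMatrix_apply, ← f.toEquiv.sum_comp (fun w => _ * v w)]
  simp [f.map_adj_iff]

section SpectralRadius

open scoped Classical

variable {V : Type*} [Fintype V] [DecidableEq V] (G : SimpleGraph V)

theorem hasEigenvalue_specRad (h : 0 < specRad G) :
    Module.End.HasEigenvalue (toLin' (G.adjMatrix ℝ)) (specRad G) := by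
  have hne : {x : ℝ | Module.End.HasEigenvalue (toLin' (G.adjMatrix ℝ)) x}.Nonempty := by
    by_contra hempty
    rw [Set.not_nonempty_iff_eq_empty] at hempty
    exact h.ne' (by rw [specRad, hempty, Real.sSup_empty])
  exact hne.csSup_mem (Module.End.finite_hasEigenvalue _)

theorem specRad_le_of_degree_le {d : ℕ} (h : ∀ v, G.degree v ≤ d) : specRad G ≤ d := by
  refine Real.sSup_le (fun μ hμ => ?_) d.cast_nonneg
  obtain ⟨v, hv⟩ := Module.End.HasEigenvalue.exists_hasEigenvector hμ
  have hAv : G.adjMatrix ℝ *ᵥ v = μ • v := by simpa using hv.apply_eq_smul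
  obtain ⟨u, hu⟩ := Function.ne_iff.mp hv.2
  have : Nonempty V := ⟨u⟩
  obtain ⟨k, hk⟩ := Finite.exists_max fun u => |v u|
  have hvk : 0 < |v k| := (abs_pos.mpr hu).trans_le (hk u)
  have hrow : μ * v k = ∑ u ∈ G.neighborFinset k, v u := by
    rw [← adjMatrix_mulVec_apply, hAv]; rfl
  have : |μ| * |v k| ≤ d * |v k| := calc
    |μ| * |v k| = |∑ u ∈ G.neighborFinset k, v u| := by rw [← abs_mul, hrow]
    _ ≤ ∑ u ∈ G.neighborFinset k, |v k| :=
      (abs_sum_le_sum_abs _ _).trans (sum_le_sum fun u _ => hk u)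
    _ = G.degree k * |v k| := by rw [sum_const, card_neighborFinset_eq_degree, nsmul_eq_mul]
    _ ≤ d * |v k| := by gcongr; exact_mod_cast h k
  exact (le_abs_self μ).trans (le_of_mul_le_mul_right this hvk)

end SpectralRadius

section CellGraph

variable {α β α' β' : Type*}

/-- The complete bipartite graph on `α ⊕ β` with the cells of `D` removed. -/
def cellGraph (D : Set (α × β)) : SimpleGraph (α ⊕ β) where
  Adj
    | .inl a, .inr b => (a, b) ∉ D
    | .inr b, .inl a => (a, b) ∉ D
    | _, _ => False
  symm := ⟨by rintro (a | b) (a' | b') h <;> exact h⟩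
  loopless := ⟨by rintro (a | b) h <;> exact h⟩

variable {D : Set (α × β)} {a a' : α} {b b' : β}

@[simp] theorem cellGraph_adj_inl_inr : (cellGraph D).Adj (.inl a) (.inr b) ↔ (a, b) ∉ D := Iff.rfl

@[simp] theorem cellGraph_adj_inr_inl : (cellGraph D).Adj (.inr b) (.inl a) ↔ (a, b) ∉ D := Iff.rfl

@[simp] theorem not_cellGraph_adj_inl_inl : ¬(cellGraph D).Adj (.inl a) (.inl a') := id

@[simp] theorem not_cellGraph_adj_inr_inr : ¬(cellGraph D).Adj (.inr b) (.inr b') := id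

def cellGraphCongr {D' : Set (α' × β')} (π : α ≃ α') (ρ : β ≃ β')
    (h : ∀ a b, (a, b) ∈ D ↔ (π a, ρ b) ∈ D') : cellGraph D ≃g cellGraph D' where
  toEquiv := π.sumCongr ρ
  map_rel_iff' := by rintro (a | b) (a' | b') <;> simp [h]

def cellGraphSwap {D' : Set (β × α)} (h : ∀ a b, (a, b) ∈ D ↔ (b, a) ∈ D') :
    cellGraph D ≃g cellGraph D' where
  toEquiv := Equiv.sumComm α β
  map_rel_iff' := by rintro (a | b) (a' | b') <;> simp [h]

section Finite

open scoped Classical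

variable [Fintype α] [Fintype β]

theorem degree_cellGraph_inl_le (hab : (a, b) ∈ D) :
    (cellGraph D).degree (.inl a) ≤ Fintype.card β - 1 := by
  rw [← card_neighborFinset_eq_degree, ← card_univ, ← card_erase_of_mem (mem_univ b)]
  refine (card_le_card fun w hw => ?_).trans (card_image_le (s := univ.erase b) (f := Sum.inr))
  rcases w with a' | b'
  · simp at hw
  · simp only [mem_neighborFinset, cellGraph_adj_inl_inr] at hw
    simpa using fun h : b' = b => hw (h ▸ hab)

theorem degree_cellGraph_inr_le (hab : (a, b) ∈ D) :
    (cellGraph D).degree (.inr b) ≤ Fintype.card α - 1 := by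
  let e : cellGraph D ≃g cellGraph {c : β × α | c.swap ∈ D} := cellGraphSwap fun _ _ => Iff.rfl
  rw [← e.degree_eq]
  exact degree_cellGraph_inl_le (D := {c : β × α | c.swap ∈ D}) hab

theorem sq_le_card_compl_of_cellGraph [DecidableEq α] [DecidableEq β] (D : Finset (α × β))
    {μ : ℝ} {w : α ⊕ β → ℝ} (hw : w ≠ 0)
    (h : (cellGraph (D : Set (α × β))).adjMatrix ℝ *ᵥ w = μ • w) : μ ^ 2 ≤ #Dᶜ := by
  let M : Matrix α β ℝ := fun a b => if (a, b) ∈ D then 0 else 1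
  have hrow (x : α ⊕ β) :
      μ * w x = ∑ y, (cellGraph (D : Set (α × β))).adjMatrix ℝ x y * w y := by
    rw [← smul_eq_mul, ← Pi.smul_apply, ← h]; rfl
  have hq : M *ᵥ (w ∘ .inr) = μ • (w ∘ .inl) := by
    ext a
    simp [hrow, Fintype.sum_sum_type, M, mulVec, dotProduct, adjMatrix_apply]
  have hp : Mᵀ *ᵥ (w ∘ .inl) = μ • (w ∘ .inr) := by
    ext b
    simp only [mulVec, dotProduct, transpose_apply]
    simp [hrow, Fintype.sum_sum_type, M, adjMatrix_apply]
  have hpq : w ∘ .inl ≠ 0 ∨ w ∘ .inr ≠ 0 := by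
    by_contra! h0
    exact hw (funext fun x => by rcases x with a | b; exacts [congrFun h0.1 a, congrFun h0.2 b])
  have hM : ∑ a, ∑ b, M a b ^ 2 = #Dᶜ := by
    simp only [M, ← Fintype.sum_prod_type']
    simp [sum_ite, filter_not, compl_eq_univ_sdiff]
  exact hM ▸ sq_le_sum_sq_of_mulVec_eq M hq hp hpq

end Finite

end CellGraph

section Lines

variable {α β : Type*}

def SameLine (a b : α × β) : Prop := a.1 = b.1 ∨ a.2 = b.2

theorem eq_or_eq_of_sameLine {p r a : α × β} (hpr : ¬SameLine p r) (hp : SameLine a p)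
    (hr : SameLine a r) : a = (p.1, r.2) ∨ a = (r.1, p.2) := by
  unfold SameLine at *
  obtain ⟨a₁, a₂⟩ := a
  simp only [Prod.mk.injEq]
  rcases hp with h₁ | h₁ <;> rcases hr with h₂ | h₂
  · exact absurd (h₁.symm.trans h₂) (not_or.mp hpr).1
  · exact .inl ⟨h₁, h₂⟩
  · exact .inr ⟨h₂, h₁⟩
  · exact absurd (h₁.symm.trans h₂) (not_or.mp hpr).2

theorem sameLine_of_forall_sameLine [DecidableEq α] [DecidableEq β] {S T : Finset (α × β)}
    (hS : 2 < #S) (hST : ∀ a ∈ S, ∀ b ∈ T, SameLine a b) {p r : α × β} (hp : p ∈ T)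
    (hr : r ∈ T) : SameLine p r := by
  by_contra hpr
  have : S ⊆ {(p.1, r.2), (r.1, p.2)} := fun a ha => by
    simpa using eq_or_eq_of_sameLine hpr (hST a ha p hp) (hST a ha r hr)
  exact absurd ((card_le_card this).trans card_le_two) (by omega)

theorem sameRow_or_sameCol {S : Finset (α × β)} (hS : ∀ a ∈ S, ∀ b ∈ S, SameLine a b) :
    (∀ a ∈ S, ∀ b ∈ S, a.1 = b.1) ∨ ∀ a ∈ S, ∀ b ∈ S, a.2 = b.2 := by
  by_contra! ⟨⟨a, ha, b, hb, hab⟩, c, hc, d, hd, hcd⟩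
  have hab₂ : a.2 = b.2 := (hS a ha b hb).resolve_left hab
  obtain ⟨x, hx, hxa⟩ : ∃ x ∈ S, x.2 ≠ a.2 := by
    by_contra! h
    exact hcd ((h c hc).trans (h d hd).symm)
  exact hab (((hS x hx a ha).resolve_right hxa).symm.trans
    ((hS x hx b hb).resolve_right (hab₂ ▸ hxa)))

variable [Fintype α] [Fintype β]

def IsLine (L : Finset (α × β)) : Prop :=
  (∃ r, L = {r} ×ˢ univ) ∨ ∃ c, L = univ ×ˢ {c}

theorem isLine_of_forall_sameLine [Nonempty α] {S : Finset (α × α)}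
    (hS : ∀ a ∈ S, ∀ b ∈ S, SameLine a b) (hcard : #S = Fintype.card α) : IsLine S := by
  obtain ⟨a, ha⟩ : S.Nonempty := card_pos.mp (hcard ▸ Fintype.card_pos)
  rcases sameRow_or_sameCol hS with h | h
  · refine .inl ⟨a.1, eq_of_subset_of_card_le (fun b hb => ?_) (by simp [hcard])⟩
    simpa only [mem_product, mem_singleton, mem_univ, and_true] using h b hb a ha
  · refine .inr ⟨a.2, eq_of_subset_of_card_le (fun b hb => ?_) (by simp [hcard])⟩
    simpa only [mem_product, mem_singleton, mem_univ, true_and] using h b hb a ha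

theorem eq_of_isLine_of_forall_sameLine (hα : 1 < Fintype.card α) {L T : Finset (α × α)}
    (hL : IsLine L) (hLT : ∀ a ∈ L, ∀ b ∈ T, SameLine a b) (hT : #T = Fintype.card α) :
    T = L := by
  rcases hL with ⟨r, rfl⟩ | ⟨c, rfl⟩
  · refine eq_of_subset_of_card_le (fun b hb => ?_) (by simp [hT])
    obtain ⟨c, hc⟩ := Fintype.exists_ne_of_one_lt_card hα b.2
    simpa only [mem_product, mem_singleton, mem_univ, and_true] using
      ((hLT (r, c) (by simp) b hb).resolve_right hc).symm
  · refine eq_of_subset_of_card_le (fun b hb => ?_) (by simp [hT])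
    obtain ⟨r, hr⟩ := Fintype.exists_ne_of_one_lt_card hα b.1
    simpa only [mem_product, mem_singleton, mem_univ, true_and] using
      ((hLT (r, c) (by simp) b hb).resolve_left hr).symm

theorem card_eq_two_of_not_sameLine [DecidableEq α] {D : α → Finset (α × α)}
    (hcard : ∀ i, #(D i) = Fintype.card α)
    (hcross : ∀ i j, i ≠ j → ∀ a ∈ D i, ∀ b ∈ D j, SameLine a b) {i : α} {a b : α × α}
    (ha : a ∈ D i) (hb : b ∈ D i) (hab : ¬SameLine a b) : Fintype.card α = 2 := by
  have hα : 1 < Fintype.card α := Fintype.one_lt_card_iff.mpr ⟨a.1, b.1, fun h => hab (.inl h)⟩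
  obtain ⟨j, hj⟩ := Fintype.exists_ne_of_one_lt_card hα i
  by_contra h
  exact hab (sameLine_of_forall_sameLine (S := D j) (by rw [hcard j]; omega) (hcross j i hj) ha hb)

theorem exists_isLine_of_forall_sameLine {D : α → Finset (α × α)}
    (hcard : ∀ i, #(D i) = Fintype.card α)
    (hcross : ∀ i j, i ≠ j → ∀ a ∈ D i, ∀ b ∈ D j, SameLine a b) (i₀ : α)
    (h₀ : ∀ a ∈ D i₀, ∀ b ∈ D i₀, SameLine a b) : ∃ L, IsLine L ∧ ∀ i, D i = L := by
  have : Nonempty α := ⟨i₀⟩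
  refine ⟨D i₀, isLine_of_forall_sameLine h₀ (hcard i₀), fun i => ?_⟩
  obtain rfl | hi := eq_or_ne i i₀
  · rfl
  exact eq_of_isLine_of_forall_sameLine (Fintype.one_lt_card_iff.mpr ⟨i, i₀, hi⟩)
    (isLine_of_forall_sameLine h₀ (hcard i₀)) (hcross i₀ i hi.symm) (hcard i)

end Lines

section MissedRows

open Equiv

variable {α : Type*} [DecidableEq α]

theorem exists_perm_apply_eq_and_apply_eq {a a' b b' : α} (ha : a ≠ a') (hb : b ≠ b') :
    ∃ π : Perm α, π a = b ∧ π a' = b' := by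
  set c := swap a b a'
  have hcb : c ≠ b := by
    simp only [c, swap_apply_def]
    split_ifs with h₁ h₂
    · exact (ha h₁.symm).elim
    · exact fun h => ha (h.trans h₂.symm)
    · exact h₂
  refine ⟨swap c b' * swap a b, ?_, ?_⟩
  · rw [Perm.mul_apply, swap_apply_left, swap_apply_of_ne_of_ne hcb.symm hb]
  · rw [Perm.mul_apply, swap_apply_left]

variable [Fintype α]

/-- `σ` is the perfect matching `x_k ↦ y_{σ k}` and `τ` colours its edge at row `k` by `τ k`;
this counts the rows whose edge is missing from its colour class. -/
def missedCount (D : α → Finset (α × α)) (σ τ : Perm α) : ℕ := #{k | (k, σ k) ∈ D (τ k)}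

theorem missedCount_eq_zero_iff (D : α → Finset (α × α)) (σ τ : Perm α) :
    missedCount D σ τ = 0 ↔ ∀ k, (k, σ k) ∉ D (τ k) := by
  simp [missedCount, filter_eq_empty_iff]

variable [AddGroup α] (D : α → Finset (α × α))

/-- For each row `k`, `a ↦ σ (k + a)` and `b ↦ τ (k + b)` are bijections, so the `|α|²` shifted
pairs meet every (row, column, colour) triple exactly once. -/
theorem sum_missedCount_addRight (σ τ : Perm α) :
    ∑ ab : α × α, missedCount D (σ * Equiv.addRight ab.1) (τ * Equiv.addRight ab.2) =
      ∑ i, #(D i) := by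
  let χ (k l i : α) : ℕ := if (k, l) ∈ D i then 1 else 0
  have hshift (k : α) (π : Perm α) (g : α → ℕ) :
      ∑ a, g ((π * Equiv.addRight a : Perm α) k) = ∑ l, g l :=
    ((Equiv.addLeft k).trans π).sum_comp g
  calc ∑ ab : α × α, missedCount D (σ * Equiv.addRight ab.1) (τ * Equiv.addRight ab.2)
      = ∑ a, ∑ k, ∑ b, χ k ((σ * Equiv.addRight a : Perm α) k)
          ((τ * Equiv.addRight b : Perm α) k) := by
        simp only [missedCount, card_filter, Fintype.sum_prod_type]
        exact sum_congr rfl fun a _ => sum_comm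
    _ = ∑ k, ∑ l, ∑ i, χ k l i := by
        rw [sum_comm]
        exact sum_congr rfl fun k _ =>
          (sum_congr rfl fun a _ => hshift k τ _).trans (hshift k σ fun l => ∑ i, χ k l i)
    _ = ∑ i, #(D i) := by
        rw [← Fintype.sum_prod_type', sum_comm]
        simp [χ]

theorem exists_missedCount_eq_zero (hsum : ∑ i, #(D i) ≤ Fintype.card α ^ 2) (σ τ : Perm α)
    (h : ∑ i, #(D i) < Fintype.card α ^ 2 ∨ 2 ≤ missedCount D σ τ) :
    ∃ σ' τ' : Perm α, missedCount D σ' τ' = 0 := by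
  by_contra! hpos
  let f (ab : α × α) := missedCount D (σ * Equiv.addRight ab.1) (τ * Equiv.addRight ab.2)
  have hf₀ : f 0 = missedCount D σ τ := by simp [f]
  have hrest : #(univ.erase (0 : α × α)) ≤ ∑ ab ∈ univ.erase 0, f ab := by
    simpa only [smul_eq_mul, mul_one] using
      card_nsmul_le_sum _ f 1 fun ab _ => Nat.one_le_iff_ne_zero.mpr (hpos _ _)
  have htotal : f 0 + ∑ ab ∈ univ.erase 0, f ab = ∑ i, #(D i) :=
    (add_sum_erase univ f (mem_univ 0)).trans (sum_missedCount_addRight D σ τ)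
  have hcard : #(univ.erase (0 : α × α)) + 1 = Fintype.card α ^ 2 := by
    rw [card_erase_add_one (mem_univ _), card_univ, Fintype.card_prod, sq]
  have := hpos σ τ
  omega

theorem exists_missedCount_eq_zero_or (hD : ∀ i, #(D i) ≤ Fintype.card α) :
    (∃ σ τ : Perm α, missedCount D σ τ = 0) ∨
      (∀ i, #(D i) = Fintype.card α) ∧ ∀ i j, i ≠ j → ∀ a ∈ D i, ∀ b ∈ D j, SameLine a b := by
  have hsum : ∑ i, #(D i) ≤ Fintype.card α ^ 2 := by
    simpa [sq] using sum_le_card_nsmul univ _ _ fun i _ => hD i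
  by_cases hlt : ∑ i, #(D i) < Fintype.card α ^ 2
  · exact .inl (exists_missedCount_eq_zero D hsum 1 1 (.inl hlt))
  by_cases hind : ∃ i j, i ≠ j ∧ ∃ a ∈ D i, ∃ b ∈ D j, ¬SameLine a b
  · obtain ⟨i, j, hij, a, ha, b, hb, hab⟩ := hind
    obtain ⟨hab₁, hab₂⟩ := not_or.mp hab
    obtain ⟨σ, hσa, hσb⟩ := exists_perm_apply_eq_and_apply_eq hab₁ hab₂
    obtain ⟨τ, hτa, hτb⟩ := exists_perm_apply_eq_and_apply_eq hab₁ hij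
    refine .inl (exists_missedCount_eq_zero D hsum σ τ (.inr ?_))
    calc 2 = #{a.1, b.1} := (card_pair hab₁).symm
      _ ≤ missedCount D σ τ := card_le_card fun k hk => by
        rcases mem_insert.mp hk with rfl | hk
        · simpa [hσa, hτa] using ha
        · rw [mem_singleton.mp hk]
          simpa [hσb, hτb] using hb
  · push Not at hind
    have hall := (sum_eq_sum_iff_of_le fun i (_ : i ∈ univ) => hD i).mp
      (by simpa [sq] using le_antisymm hsum (not_lt.mp hlt))
    exact .inr ⟨fun i => hall i (mem_univ i), hind⟩

end MissedRows

theorem exists_isRainbowFactor_of_equiv {V α β : Type*} {m : ℕ} (F : Fin m → SimpleGraph V)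
    (e : α ⊕ β ≃ V) (σ : α ≃ β) (τ : α ≃ Fin m)
    (h : ∀ a, (F (τ a)).Adj (e (.inl a)) (e (.inr (σ a)))) : ∃ H, IsRainbowFactor F 1 H := by
  let f (a : α) : Sym2 V := s(e (.inl a), e (.inr (σ a)))
  have hf : Function.Injective f := fun a a' haa' => by simpa [f] using haa'
  have hE : (fromEdgeSet (Set.range f)).edgeSet = Set.range f := by
    rw [edgeSet_fromEdgeSet, sdiff_eq_left, Set.disjoint_left]
    rintro _ ⟨a, rfl⟩
    simp [f]
  refine ⟨fromEdgeSet (Set.range f), fun v => Set.ncard_eq_one.mpr ?_, ?_⟩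
  · obtain ⟨a | b, rfl⟩ := e.surjective v
    · refine ⟨e (.inr (σ a)), Set.ext fun w => ?_⟩
      simp +contextual [f, eq_comm (b := w)]
    · refine ⟨e (.inl (σ.symm b)), Set.ext fun w => ?_⟩
      simp +contextual [f, eq_comm (b := w), ← Equiv.eq_symm_apply]
  · refine ⟨(Equiv.setCongr hE).trans ((Equiv.ofInjective f hf).symm.trans τ), ?_⟩
    rintro ⟨x, hx⟩
    obtain ⟨a, rfl⟩ := hE ▸ hx
    simp only [Equiv.trans_apply, Equiv.setCongr_apply, Equiv.ofInjective_symm_apply]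
    exact h a

section Halves

variable {n : ℕ}

/-- The parts `X = {0, …, n-1}` and `Y = {n, …, 2n-1}` of `Fin (2 * n)`. -/
def halvesEquiv (n : ℕ) : Fin n ⊕ Fin n ≃ Fin (2 * n) :=
  finSumFinEquiv.trans (finCongr (two_mul n).symm)

@[simp] theorem halvesEquiv_inl_val (k : Fin n) : (halvesEquiv n (.inl k)).val = k := rfl

@[simp] theorem halvesEquiv_inr_val (l : Fin n) : (halvesEquiv n (.inr l)).val = n + l := rfl

open scoped Classical in
noncomputable def missingCells (G : SimpleGraph (Fin (2 * n))) : Finset (Fin n × Fin n) :=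
  {c | ¬G.Adj (halvesEquiv n (.inl c.1)) (halvesEquiv n (.inr c.2))}

variable {G G' : SimpleGraph (Fin (2 * n))}

theorem mem_missingCells {c : Fin n × Fin n} :
    c ∈ missingCells G ↔ ¬G.Adj (halvesEquiv n (.inl c.1)) (halvesEquiv n (.inr c.2)) := by
  simp [missingCells]

theorem adj_halvesEquiv_iff (hB : G.IsBipartiteWith {u | u.val < n} {u | n ≤ u.val})
    (s t : Fin n ⊕ Fin n) :
    G.Adj (halvesEquiv n s) (halvesEquiv n t) ↔
      (cellGraph (missingCells G : Set (Fin n × Fin n))).Adj s t := by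
  rcases s with k | l <;> rcases t with k' | l'
  · simp only [not_cellGraph_adj_inl_inl, iff_false]
    intro h
    have := hB.mem_of_adj h
    simp only [Set.mem_ofPred_eq, halvesEquiv_inl_val] at this
    omega
  · simp [mem_missingCells]
  · simp [mem_missingCells, G.adj_comm]
  · simp only [not_cellGraph_adj_inr_inr, iff_false]
    intro h
    simpa using hB.mem_of_adj h

def cellGraphIso (hB : G.IsBipartiteWith {u | u.val < n} {u | n ≤ u.val}) :
    cellGraph (missingCells G : Set (Fin n × Fin n)) ≃g G where
  toEquiv := halvesEquiv n
  map_rel_iff' := adj_halvesEquiv_iff hB _ _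

theorem eq_of_missingCells_eq (hB : G.IsBipartiteWith {u | u.val < n} {u | n ≤ u.val})
    (hB' : G'.IsBipartiteWith {u | u.val < n} {u | n ≤ u.val})
    (h : missingCells G = missingCells G') : G = G' := by
  ext u v
  obtain ⟨s, rfl⟩ := (halvesEquiv n).surjective u
  obtain ⟨t, rfl⟩ := (halvesEquiv n).surjective v
  rw [adj_halvesEquiv_iff hB, adj_halvesEquiv_iff hB', h]

open scoped Classical in
theorem sq_le_card_compl_missingCells (hB : G.IsBipartiteWith {u | u.val < n} {u | n ≤ u.val})
    {μ : ℝ} (hμ : Module.End.HasEigenvalue (toLin' (G.adjMatrix ℝ)) μ) :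
    μ ^ 2 ≤ #(missingCells G)ᶜ := by
  obtain ⟨v, hv⟩ := hμ.exists_hasEigenvector
  have hAv : G.adjMatrix ℝ *ᵥ v = μ • v := by simpa using hv.apply_eq_smul
  refine sq_le_card_compl_of_cellGraph (missingCells G) (w := v ∘ cellGraphIso hB) ?_ ?_
  · refine fun h => hv.2 (funext fun u => ?_)
    obtain ⟨s, rfl⟩ := (halvesEquiv n).surjective u
    exact congrFun h s
  · ext s
    rw [← (cellGraphIso hB).adjMatrix_mulVec_apply, hAv]
    rfl

theorem card_missingCells_le (hB : G.IsBipartiteWith {u | u.val < n} {u | n ≤ u.val})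
    (hρ : Real.sqrt ((n : ℝ) * ((n : ℝ) - 1)) ≤ specRad G) : #(missingCells G) ≤ n := by
  rcases Nat.lt_or_ge n 2 with hn | hn
  · have := card_le_univ (missingCells G)
    simp only [Fintype.card_prod, Fintype.card_fin] at this
    interval_cases n <;> omega
  have hn' : (2 : ℝ) ≤ n := by exact_mod_cast hn
  have hpos : 0 < specRad G := (Real.sqrt_pos.mpr (by nlinarith)).trans_le hρ
  have h₁ := sq_le_card_compl_missingCells hB (hasEigenvalue_specRad G hpos)
  have h₂ := (Real.sqrt_le_iff.mp hρ).2
  rw [card_compl, Fintype.card_prod, Fintype.card_fin] at h₁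
  have h₃ : ((n * n - #(missingCells G) : ℕ) : ℝ) = n * n - #(missingCells G) := by
    rw [Nat.cast_sub ((card_le_univ _).trans_eq (by simp)), Nat.cast_mul]
  rw [h₃] at h₁
  exact_mod_cast (by nlinarith : (#(missingCells G) : ℝ) ≤ n)

theorem specRad_le_of_missingCells_covers
    (hB : G.IsBipartiteWith {u | u.val < n} {u | n ≤ u.val})
    (hrow : ∀ k, ∃ l, (k, l) ∈ missingCells G) (hcol : ∀ l, ∃ k, (k, l) ∈ missingCells G) :
    specRad G ≤ (n - 1 : ℕ) := by
  classical
  refine specRad_le_of_degree_le G fun u => ?_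
  obtain ⟨s, rfl⟩ := (halvesEquiv n).surjective u
  rw [show halvesEquiv n s = cellGraphIso hB s from rfl, (cellGraphIso hB).degree_eq]
  rcases s with k | l
  · obtain ⟨l, hl⟩ := hrow k
    simpa using degree_cellGraph_inl_le (D := (missingCells G : Set (Fin n × Fin n))) hl
  · obtain ⟨k, hk⟩ := hcol l
    simpa using degree_cellGraph_inr_le (D := (missingCells G : Set (Fin n × Fin n))) hk

/-- Two missing cells in different rows and columns of a `2 × 2` grid leave a perfect matching,
whose spectral radius `1` is below `√2`. -/
theorem sameLine_of_mem_missingCells (hn : n = 2)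
    (hB : G.IsBipartiteWith {u | u.val < n} {u | n ≤ u.val})
    (hρ : Real.sqrt ((n : ℝ) * ((n : ℝ) - 1)) ≤ specRad G) {a b : Fin n × Fin n}
    (ha : a ∈ missingCells G) (hb : b ∈ missingCells G) : SameLine a b := by
  subst hn
  by_contra hab
  obtain ⟨h₁, h₂⟩ := not_or.mp hab
  have hcover : ∀ {x y : Fin 2}, x ≠ y → ∀ z, z = x ∨ z = y := by decide
  have hle := specRad_le_of_missingCells_covers hB
    (fun k => (hcover h₁ k).elim (fun h => ⟨a.2, h ▸ ha⟩) (fun h => ⟨b.2, h ▸ hb⟩))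
    (fun l => (hcover h₂ l).elim (fun h => ⟨a.1, h ▸ ha⟩) (fun h => ⟨b.1, h ▸ hb⟩))
  have : (1 : ℝ) < √2 := by
    rw [Real.lt_sqrt zero_le_one]; norm_num
  norm_num at hρ hle
  linarith

theorem nonempty_iso_bipG_of_isLine (hB : G.IsBipartiteWith {u | u.val < n} {u | n ≤ u.val})
    (hL : IsLine (missingCells G)) : Nonempty (G ≃g bipG n 0 1) := by
  have hcol (c : Fin n) :
      Nonempty (cellGraph ((univ ×ˢ {c} : Finset (Fin n × Fin n)) : Set (Fin n × Fin n)) ≃g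
        bipG n 0 1) := by
    let last : Fin n := ⟨n - 1, by have := c.isLt; omega⟩
    refine ⟨(cellGraphCongr (D' := {x | x.2 = last}) (.refl _) (Equiv.swap c last)
      fun k l => ?_).trans ⟨halvesEquiv n, ?_⟩⟩
    · simpa [Equiv.swap_apply_eq_iff] using eq_comm
    · rintro (k | l) (k' | l') <;>
        simp only [bipG, last, halvesEquiv_inl_val, halvesEquiv_inr_val, cellGraph_adj_inl_inr,
          cellGraph_adj_inr_inl, not_cellGraph_adj_inl_inl, not_cellGraph_adj_inr_inr,
          Set.mem_ofPred_eq, Fin.ext_iff, iff_false] <;> omega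
  obtain ⟨r, hr⟩ | ⟨c, hc⟩ := hL
  · obtain ⟨e⟩ := hcol r
    exact ⟨(cellGraphIso hB).symm.trans ((cellGraphSwap fun k l => by simp [hr]).trans e)⟩
  · obtain ⟨e⟩ := hcol c
    exact ⟨(cellGraphIso hB).symm.trans (hc ▸ e)⟩

end Halves

/-- Shi–Li–Chen: spectral condition for a rainbow perfect matching
in a family of balanced bipartite graphs. -/
theorem stmt15 (n : ℕ) (𝒢 : Fin n → SimpleGraph (Fin (2*n)))
    (hbip : ∀ i u v, (𝒢 i).Adj u v → (u.val < n ∧ n ≤ v.val) ∨ (v.val < n ∧ n ≤ u.val))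
    (hρ : ∀ i, Real.sqrt ((n:ℝ)*((n:ℝ)-1)) ≤ specRad (𝒢 i)) :
    (∃ H, IsRainbowFactor 𝒢 1 H) ∨
      ((∀ i j, 𝒢 i = 𝒢 j) ∧ ∀ i, Nonempty (𝒢 i ≃g bipG n 0 1)) := by
  obtain rfl | hn := Nat.eq_zero_or_pos n
  · exact .inl (exists_isRainbowFactor_of_equiv 𝒢 (halvesEquiv 0) (.refl _) (.refl _) finZeroElim)
  have : NeZero n := ⟨hn.ne'⟩
  have hB (i) : (𝒢 i).IsBipartiteWith {u | u.val < n} {u | n ≤ u.val} :=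
    ⟨Set.disjoint_left.mpr fun _ h₁ h₂ => Nat.not_le_of_lt h₁ h₂,
      fun u v h => (hbip i u v h).imp id And.symm⟩
  obtain ⟨σ, τ, h₀⟩ | ⟨hcard, hcross⟩ :=
    exists_missedCount_eq_zero_or (fun i => missingCells (𝒢 i))
      fun i => by simpa using card_missingCells_le (hB i) (hρ i)
  · refine .inl (exists_isRainbowFactor_of_equiv 𝒢 (halvesEquiv n) σ τ fun k => ?_)
    simpa [mem_missingCells] using (missedCount_eq_zero_iff _ _ _).mp h₀ k
  have hline : ∀ a ∈ missingCells (𝒢 0), ∀ b ∈ missingCells (𝒢 0), SameLine a b :=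
    fun a ha b hb => by
      by_contra hab
      have hn2 : n = 2 := by simpa using card_eq_two_of_not_sameLine hcard hcross ha hb hab
      exact hab (sameLine_of_mem_missingCells hn2 (hB 0) (hρ 0) ha hb)
  obtain ⟨L, hL, hDL⟩ := exists_isLine_of_forall_sameLine hcard hcross 0 hline
  exact .inr ⟨fun i j => eq_of_missingCells_eq (hB i) (hB j) ((hDL i).trans (hDL j).symm),
    fun i => nonempty_iso_bipG_of_isLine (hB i) (hDL i ▸ hL)⟩
end
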